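/- arXiv:2407.08385 — 6 statements merged into one kernel-verified Lean document; each statement's English description precedes it below -/
import Mathlib

section
/- Let m, n, t ≥ 1 and d ≥ 1, and let ψ : {0,1}^m → ℝ satisfy Σ_x |ψ(x)| = 1, Σ_x ψ(x) = 0, and Σ_x ψ(x)·q(x) = 0 for every real polynomial q in m variables of total degree < d. Define probability distributions μ_1(x) = 2ψ(x)·1[ψ(x)>0] and μ_0(x) = 2|ψ(x)|·1[ψ(x)<0] on {0,1}^m. For a real polynomial p in n·t·m variables, define Lp : {0,1}^n → ℝ by Lp(z) = E[p(x_{11},…,x_{1t},x_{21},…,x_{2t},…,x_{n1},…,x_{nt})], where the x_{ij} ∈ {0,1}^m are mutually independent and each x_{ij} is distributed according to μ_{z_i}. Then Lp agrees on {0,1}^n with a real polynomial in n variables of total degree at most deg(p)/d. -/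
open MvPolynomial Finset

/-- Embed a bit into ℝ. -/
def boolToReal (b : Bool) : ℝ := if b then 1 else 0

/-- Embed a Boolean point into ℝ^n. -/
def embed {n : ℕ} (x : Fin n → Bool) : Fin n → ℝ := fun i => boolToReal (x i)

/-- `p` ε-approximates `f` pointwise on the Boolean cube. -/
def IsApprox {n : ℕ} (ε : ℝ) (f : (Fin n → Bool) → Bool) (p : MvPolynomial (Fin n) ℝ) : Prop :=
  ∀ x : Fin n → Bool, |MvPolynomial.eval (embed x) p - boolToReal (f x)| ≤ ε

/-- ε-approximate degree. -/
noncomputable def adegE {n : ℕ} (ε : ℝ) (f : (Fin n → Bool) → Bool) : ℕ :=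
  sInf { d : ℕ | ∃ p : MvPolynomial (Fin n) ℝ, p.totalDegree ≤ d ∧ IsApprox ε f p }

/-- Approximate degree (ε = 1/3). -/
noncomputable def adeg {n : ℕ} (f : (Fin n → Bool) → Bool) : ℕ := adegE (1/3) f

/-- Block composition f ∘ g. -/
def bcomp {n m : ℕ} (f : (Fin n → Bool) → Bool) (g : (Fin m → Bool) → Bool) :
    (Fin (n * m) → Bool) → Bool :=
  fun x => f fun i => g fun j => x (finProdFinEquiv (i, j))

/-- d-fold recursive composition h^d. -/
def recComp {k : ℕ} (h : (Fin k → Bool) → Bool) : (d : ℕ) → ((Fin (k ^ d) → Bool) → Bool)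
  | 0 => fun x => x (Fin.cast (pow_zero k).symm 0)
  | d + 1 => fun x => bcomp h (recComp h d) fun i => x (Fin.cast (pow_succ' k d).symm i)

/-- Majority on t bits: 1 iff Hamming weight > t/2. -/
def MAJ (t : ℕ) : (Fin t → Bool) → Bool :=
  fun x => decide (t < 2 * (Finset.univ.filter fun i => x i = true).card)

def ANDf (t : ℕ) : (Fin t → Bool) → Bool := fun x => decide (∀ i, x i = true)
def ORf (t : ℕ) : (Fin t → Bool) → Bool := fun x => decide (∃ i, x i = true)
def PARITYf (t : ℕ) : (Fin t → Bool) → Bool :=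
  fun x => decide ((Finset.univ.filter fun i => x i = true).card % 2 = 1)

/-- (x₁ ∨ x₂) ∧ (x₃ ∨ x₄). -/
def ANDOR4 : (Fin 4 → Bool) → Bool := fun x => (x 0 || x 1) && (x 2 || x 3)

/-- Flip coordinate i of x. -/
def flip1 {t : ℕ} (x : Fin t → Bool) (i : Fin t) : Fin t → Bool :=
  Function.update x i (!(x i))

open Classical in
/-- μ_b: the distribution μ₁ (b = true) or μ₀ (b = false) obtained from ψ. -/
noncomputable def mu {m : ℕ} (ψ : (Fin m → Bool) → ℝ) (b : Bool) (y : Fin m → Bool) : ℝ :=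
  if b then (if 0 < ψ y then 2 * ψ y else 0) else (if ψ y < 0 then 2 * |ψ y| else 0)

/-- Embed an n × t array of Boolean blocks of length m into ℝ^{n·t·m},
grouping coordinates as n groups of t blocks of m variables. -/
def tripleEmbed {n t m : ℕ} (x : Fin n → Fin t → Fin m → Bool) : Fin (n * (t * m)) → ℝ :=
  fun idx =>
    let a : Fin n × Fin (t * m) := finProdFinEquiv.symm idx
    let b : Fin t × Fin m := finProdFinEquiv.symm a.2
    boolToReal (x a.1 b.1 b.2)

/-- Lp(z) = E[p(x₁₁,…,x_{nt})], the x_{ij} ∈ {0,1}^m mutually independent, x_{ij} ∼ μ_{z_i}. -/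
noncomputable def Lop {n t m : ℕ} (ψ : (Fin m → Bool) → ℝ)
    (p : MvPolynomial (Fin (n * (t * m))) ℝ) (z : Fin n → Bool) : ℝ :=
  ∑ x : Fin n → Fin t → Fin m → Bool,
    (∏ i, ∏ j, mu ψ (z i) (x i j)) * MvPolynomial.eval (tripleEmbed x) p

namespace Stmt7

variable {n t m : ℕ}

def trip (i : Fin n) (j : Fin t) (k : Fin m) : Fin (n * (t * m)) :=
  finProdFinEquiv (i, finProdFinEquiv (j, k))

def tripEquiv (n t m : ℕ) : (Fin n × Fin t × Fin m) ≃ Fin (n * (t * m)) :=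
  ((Equiv.refl (Fin n)).prodCongr finProdFinEquiv).trans finProdFinEquiv

lemma tripleEmbed_trip (x : Fin n → Fin t → Fin m → Bool) (i : Fin n) (j : Fin t) (k : Fin m) :
    tripleEmbed x (trip i j k) = boolToReal (x i j k) := by
  simp [tripleEmbed, trip]

lemma prod_trip {M : Type*} [CommMonoid M] (g : Fin (n * (t * m)) → M) :
    ∏ idx, g idx = ∏ i, ∏ j, ∏ k, g (trip i j k) := by
  rw [← (tripEquiv n t m).prod_comp g, Fintype.prod_prod_type]
  exact Finset.prod_congr rfl fun i _ => Fintype.prod_prod_type _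

lemma sum_trip {M : Type*} [AddCommMonoid M] (g : Fin (n * (t * m)) → M) :
    ∑ idx, g idx = ∑ i, ∑ j, ∑ k, g (trip i j k) := by
  rw [← (tripEquiv n t m).sum_comp g, Fintype.sum_prod_type]
  exact Finset.sum_congr rfl fun i _ => Fintype.sum_prod_type _

noncomputable def Mblk (s : Fin (n * (t * m)) →₀ ℕ) (i : Fin n) (j : Fin t)
    (y : Fin m → Bool) : ℝ :=
  ∏ k, (boolToReal (y k)) ^ (s (trip i j k))

def blockDeg (s : Fin (n * (t * m)) →₀ ℕ) (i : Fin n) (j : Fin t) : ℕ :=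
  ∑ k, s (trip i j k)

lemma eval_monomial_trip (s : Fin (n * (t * m)) →₀ ℕ) (c : ℝ)
    (x : Fin n → Fin t → Fin m → Bool) :
    MvPolynomial.eval (tripleEmbed x) (monomial s c) = c * ∏ i, ∏ j, Mblk s i j (x i j) := by
  rw [eval_monomial, Finsupp.prod_pow]
  congr 1
  rw [prod_trip (fun idx => tripleEmbed x idx ^ s idx)]
  simp [Mblk, tripleEmbed_trip]

lemma sum_fn_prod {α : Type*} [Fintype α] [DecidableEq α] {β : Type*} [Fintype β]
    (F : α → β → ℝ) :
    ∑ x : α → β, ∏ a, F a (x a) = ∏ a, ∑ b, F a b :=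
  (Fintype.prod_sum (fun a b => F a b)).symm

set_option maxHeartbeats 1000000 in
lemma Lop_monomial (ψ : (Fin m → Bool) → ℝ) (s : Fin (n * (t * m)) →₀ ℕ) (c : ℝ)
    (z : Fin n → Bool) :
    Lop ψ (monomial s c) z = c * ∏ i, ∏ j, ∑ y, mu ψ (z i) y * Mblk s i j y := by
  unfold Lop
  have step1 : ∀ x : Fin n → Fin t → Fin m → Bool,
      (∏ i, ∏ j, mu ψ (z i) (x i j)) * MvPolynomial.eval (tripleEmbed x) (monomial s c)
      = c * ∏ i, ∏ j, (mu ψ (z i) (x i j) * Mblk s i j (x i j)) := by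
    intro x
    rw [eval_monomial_trip]
    rw [show (∏ i, ∏ j, (mu ψ (z i) (x i j) * Mblk s i j (x i j)))
        = (∏ i, ∏ j, mu ψ (z i) (x i j)) * ∏ i, ∏ j, Mblk s i j (x i j) by
      rw [← Finset.prod_mul_distrib]
      exact Finset.prod_congr rfl fun i _ => Finset.prod_mul_distrib]
    ring
  simp only [step1]
  rw [← Finset.mul_sum]
  congr 1
  have e1 : (∑ x : Fin n → Fin t → Fin m → Bool,
      ∏ i, ∏ j, mu ψ (z i) (x i j) * Mblk s i j (x i j))
      = ∏ i, ∑ w : Fin t → Fin m → Bool, ∏ j, mu ψ (z i) (w j) * Mblk s i j (w j) := by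
    have h := sum_fn_prod (fun (i : Fin n) (w : Fin t → Fin m → Bool) =>
      ∏ j, mu ψ (z i) (w j) * Mblk s i j (w j))
    beta_reduce at h
    exact h
  refine e1.trans (Finset.prod_congr rfl fun i _ => ?_)
  have h2 := sum_fn_prod (fun (j : Fin t) (y : Fin m → Bool) => mu ψ (z i) y * Mblk s i j y)
  beta_reduce at h2
  exact h2

lemma mu_true_eq (ψ : (Fin m → Bool) → ℝ) (y : Fin m → Bool) :
    mu ψ true y = mu ψ false y + 2 * ψ y := by
  unfold mu
  simp only [if_true, Bool.false_eq_true, if_false]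
  rcases lt_trichotomy (ψ y) 0 with h | h | h
  · rw [if_neg (by linarith), if_pos h, abs_of_neg h]; ring
  · rw [if_neg (by simp [h]), if_neg (by simp [h]), h]; ring
  · rw [if_pos h, if_neg (by linarith)]; ring

lemma sum_mu_lin (ψ : (Fin m → Bool) → ℝ) (M : (Fin m → Bool) → ℝ) :
    ∑ y, mu ψ true y * M y = (∑ y, mu ψ false y * M y) + 2 * ∑ y, ψ y * M y := by
  simp only [mu_true_eq ψ, add_mul, Finset.sum_add_distrib, Finset.mul_sum, mul_assoc]

lemma block_vanish (d : ℕ) (ψ : (Fin m → Bool) → ℝ)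
    (h3 : ∀ q : MvPolynomial (Fin m) ℝ, q.totalDegree < d →
      ∑ x : Fin m → Bool, ψ x * MvPolynomial.eval (embed x) q = 0)
    (s : Fin (n * (t * m)) →₀ ℕ) (i : Fin n) (j : Fin t) (hlt : blockDeg s i j < d) :
    ∑ y, ψ y * Mblk s i j y = 0 := by
  have key := h3 (monomial (Finsupp.equivFunOnFinite.symm fun k => s (trip i j k)) 1) ?_
  · rw [← key]
    refine Finset.sum_congr rfl fun y _ => ?_
    congr 1
    rw [eval_monomial, one_mul, Finsupp.prod_pow]
    simp [Mblk, embed]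
  · rw [totalDegree_monomial _ one_ne_zero]
    rw [Finsupp.sum_fintype _ _ (fun _ => rfl)]
    simpa [blockDeg] using hlt

lemma mono_case (d : ℕ) (ψ : (Fin m → Bool) → ℝ)
    (h3 : ∀ q : MvPolynomial (Fin m) ℝ, q.totalDegree < d →
      ∑ x : Fin m → Bool, ψ x * MvPolynomial.eval (embed x) q = 0)
    (s : Fin (n * (t * m)) →₀ ℕ) (c : ℝ) :
    ∃ q : MvPolynomial (Fin n) ℝ, d * q.totalDegree ≤ (s.sum fun _ e => e) ∧
      ∀ z, MvPolynomial.eval (embed z) q = Lop ψ (monomial s c) z := by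
  classical
  set A : Fin n → ℝ := fun i => ∏ j, ∑ y, mu ψ false y * Mblk s i j y with hA
  set B : Fin n → ℝ := fun i => (∏ j, ∑ y, mu ψ true y * Mblk s i j y) - A i with hB
  set S : Finset (Fin n) := univ.filter (fun i => ∃ j, d ≤ blockDeg s i j) with hS
  have hBzero : ∀ i ∉ S, B i = 0 := by
    intro i hi
    have hall : ∀ j, blockDeg s i j < d := by
      intro j; by_contra h
      exact hi (mem_filter.mpr ⟨mem_univ _, j, not_lt.mp h⟩)
    have heq : ∀ j, ∑ y, mu ψ true y * Mblk s i j y = ∑ y, mu ψ false y * Mblk s i j y := by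
      intro j
      rw [sum_mu_lin ψ (Mblk s i j), block_vanish d ψ h3 s i j (hall j)]
      ring
    simp only [hB, hA]
    rw [Finset.prod_congr rfl (fun j _ => heq j)]
    ring
  refine ⟨MvPolynomial.C c *
      ∏ i, (MvPolynomial.C (A i) + MvPolynomial.C (B i) * MvPolynomial.X i), ?_, ?_⟩
  · -- degree bound
    have hdeg : (MvPolynomial.C c *
        ∏ i, (MvPolynomial.C (A i) + MvPolynomial.C (B i) * MvPolynomial.X i)).totalDegree
        ≤ S.card := by
      refine le_trans (totalDegree_mul _ _) ?_
      rw [totalDegree_C, zero_add]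
      refine le_trans (totalDegree_finset_prod _ _) ?_
      have hfac : ∀ i : Fin n,
          (MvPolynomial.C (A i) + MvPolynomial.C (B i) * MvPolynomial.X i).totalDegree
          ≤ if i ∈ S then 1 else 0 := by
        intro i
        by_cases hi : i ∈ S
        · simp only [hi, if_true]
          refine le_trans (totalDegree_add _ _) (max_le (by simp) ?_)
          refine le_trans (totalDegree_mul _ _) ?_
          simp [totalDegree_X]
        · simp only [hi, if_false]
          rw [hBzero i hi]
          simp
      have hle : ∑ i : Fin n,
          (MvPolynomial.C (A i) + MvPolynomial.C (B i) * MvPolynomial.X i).totalDegree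
          ≤ ∑ i : Fin n, (if i ∈ S then (1:ℕ) else 0) :=
        Finset.sum_le_sum (fun i _ => hfac i)
      have hcard : ∑ i : Fin n, (if i ∈ S then (1:ℕ) else 0) = S.card := by
        simp [Finset.sum_ite_mem]
      exact hle.trans (le_of_eq hcard)
    refine le_trans (Nat.mul_le_mul_left d hdeg) ?_
    have hsum : (s.sum fun _ e => e) = ∑ i, ∑ j, blockDeg s i j := by
      rw [Finsupp.sum_fintype _ _ (fun _ => rfl), sum_trip (fun idx => s idx)]
      rfl
    rw [hsum]
    calc d * S.card = S.card • d := by rw [smul_eq_mul, mul_comm]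
      _ ≤ ∑ i ∈ S, ∑ j, blockDeg s i j := by
          refine Finset.card_nsmul_le_sum S _ d ?_
          intro i hi
          obtain ⟨j, hj⟩ := (mem_filter.mp hi).2
          exact le_trans hj (Finset.single_le_sum (fun _ _ => Nat.zero_le _) (mem_univ j))
      _ ≤ ∑ i, ∑ j, blockDeg s i j :=
          Finset.sum_le_sum_of_subset (Finset.subset_univ S)
  · -- evaluation
    intro z
    rw [Lop_monomial, map_mul, eval_C, map_prod]
    congr 1
    refine Finset.prod_congr rfl fun i _ => ?_
    rw [map_add, eval_C, map_mul, eval_C, eval_X]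
    cases hzi : z i
    · simp [embed, boolToReal, hzi, hA]
    · simp only [embed, boolToReal, hzi, if_true, mul_one, hB, hA]
      ring

end Stmt7

/-- the linear operator L shrinks degree by a factor of d. -/
theorem stmt_7 (m n t d : ℕ) (hm : 1 ≤ m) (hn : 1 ≤ n) (ht : 1 ≤ t) (hd : 1 ≤ d)
    (ψ : (Fin m → Bool) → ℝ)
    (h1 : ∑ x : Fin m → Bool, |ψ x| = 1)
    (h2 : ∑ x : Fin m → Bool, ψ x = 0)
    (h3 : ∀ q : MvPolynomial (Fin m) ℝ, q.totalDegree < d →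
      ∑ x : Fin m → Bool, ψ x * MvPolynomial.eval (embed x) q = 0)
    (p : MvPolynomial (Fin (n * (t * m))) ℝ) :
    ∃ q : MvPolynomial (Fin n) ℝ,
      (q.totalDegree : ℝ) ≤ (p.totalDegree : ℝ) / (d : ℝ) ∧
      ∀ z : Fin n → Bool, MvPolynomial.eval (embed z) q = Lop ψ p z := by
  classical
  choose Q hQd hQe using fun s : (Fin (n * (t * m)) →₀ ℕ) =>
    Stmt7.mono_case d ψ h3 s (MvPolynomial.coeff s p)
  refine ⟨∑ s ∈ p.support, Q s, ?_, ?_⟩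
  · have hbound : (∑ s ∈ p.support, Q s).totalDegree ≤ p.totalDegree / d := by
      refine le_trans (totalDegree_finset_sum _ _) (Finset.sup_le ?_)
      intro s hs
      rw [Nat.le_div_iff_mul_le hd]
      calc (Q s).totalDegree * d = d * (Q s).totalDegree := mul_comm _ _
        _ ≤ s.sum fun _ e => e := hQd s
        _ ≤ p.totalDegree := le_totalDegree hs
    calc ((∑ s ∈ p.support, Q s).totalDegree : ℝ)
        ≤ ((p.totalDegree / d : ℕ) : ℝ) := Nat.cast_le.mpr hbound
      _ ≤ (p.totalDegree : ℝ) / (d : ℝ) := Nat.cast_div_le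
  · intro z
    rw [map_sum]
    have hlin : Lop ψ p z = ∑ s ∈ p.support, Lop ψ (monomial s (MvPolynomial.coeff s p)) z := by
      unfold Lop
      have hev : ∀ x : Fin n → Fin t → Fin m → Bool,
          MvPolynomial.eval (tripleEmbed x) p
          = ∑ s ∈ p.support,
              MvPolynomial.eval (tripleEmbed x) (monomial s (MvPolynomial.coeff s p)) := by
        intro x
        conv_lhs => rw [p.as_sum]
        rw [map_sum]
      simp only [hev, Finset.mul_sum]
      rw [Finset.sum_comm]
    rw [hlin]
    exact Finset.sum_congr rfl fun s hs => hQe s z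
end

section
/- For every ε ∈ (0,1/2) there exists a constant C > 0 (depending only on ε) such that the following holds. Let f : {0,1}^n → {0,1} and g : {0,1}^m → {0,1} be Boolean functions, let δ ∈ (0,1/2), and let t ≥ C·(log n + log(1/δ)). Let d = adeg_{(1−ε)/2}(g) and let ψ : {0,1}^m → ℝ satisfy Σ_x |ψ(x)| = 1, Σ_x ψ(x)·g(x) > (1−ε)/2, and Σ_x ψ(x)·q(x) = 0 for every real polynomial q of total degree < d (in particular Σ_x ψ(x) = 0). Define μ_1(x) = 2ψ(x)·1[ψ(x)>0], μ_0(x) = 2|ψ(x)|·1[ψ(x)<0], and for a real polynomial p in n·t·m variables define Lp : {0,1}^n → ℝ by Lp(z) = E[p(x_{11},…,x_{1t},…,x_{n1},…,x_{nt})] with the x_{ij} ∈ {0,1}^m mutually independent and x_{ij} ∼ μ_{z_i}. If p satisfies |p(x) − (f ∘ MAJ_t ∘ g)(x)| ≤ ε for all x ∈ {0,1}^{n·t·m}, then |Lp(z) − f(z)| ≤ δ + ε for all z ∈ {0,1}^n. -/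
set_option maxHeartbeats 1000000


open MvPolynomial Finset

private lemma sum_prod_fn_aux {ι α : Type*} [Fintype ι] [DecidableEq ι] [Fintype α]
    (f : ι → α → ℝ) : ∑ x : ι → α, ∏ i, f i (x i) = ∏ i, ∑ a, f i a :=
  (Fintype.prod_sum f).symm

private lemma boolToReal_diff_le (u v : Bool) : |boolToReal u - boolToReal v| ≤ 1 := by
  cases u <;> cases v <;> simp [boolToReal]

/-- L maps an ε-approximation of f ∘ MAJ_t ∘ g
to a (δ + ε)-approximation of f. -/
theorem stmt_8 :
    ∀ ε : ℝ, ε ∈ Set.Ioo (0 : ℝ) (1/2) →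
    ∃ C : ℝ, 0 < C ∧
      ∀ n m : ℕ, ∀ f : (Fin n → Bool) → Bool, ∀ g : (Fin m → Bool) → Bool,
      ∀ δ : ℝ, δ ∈ Set.Ioo (0 : ℝ) (1/2) →
      ∀ t : ℕ, C * (Real.logb 2 (n : ℝ) + Real.logb 2 (1 / δ)) ≤ (t : ℝ) →
      ∀ ψ : (Fin m → Bool) → ℝ,
        (∑ x : Fin m → Bool, |ψ x| = 1) →
        (∑ x : Fin m → Bool, ψ x = 0) →
        ((1 - ε) / 2 < ∑ x : Fin m → Bool, ψ x * boolToReal (g x)) →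
        (∀ q : MvPolynomial (Fin m) ℝ, q.totalDegree < adegE ((1 - ε) / 2) g →
          ∑ x : Fin m → Bool, ψ x * MvPolynomial.eval (embed x) q = 0) →
      ∀ p : MvPolynomial (Fin (n * (t * m))) ℝ,
        (∀ x : Fin (n * (t * m)) → Bool,
          |MvPolynomial.eval (embed x) p
            - boolToReal (bcomp f (bcomp (MAJ t) g) x)| ≤ ε) →
      ∀ z : Fin n → Bool, |Lop ψ p z - boolToReal (f z)| ≤ δ + ε := by
  rintro ε ⟨hε0, hε2⟩
  have hε1 : ε < 1 := by linarith
  set σ : ℝ := 2 * Real.sqrt (ε * (1 - ε)) with hσdef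
  have hεε : 0 < ε * (1 - ε) := by nlinarith
  have hσ0 : 0 < σ := by positivity
  have hσsq : σ ^ 2 = 4 * (ε * (1 - ε)) := by
    rw [hσdef, mul_pow, Real.sq_sqrt hεε.le]; ring
  have hσ1 : σ < 1 := by nlinarith [sq_nonneg (1 - 2*ε)]
  have hlogσ : Real.log σ < 0 := Real.log_neg hσ0 hσ1
  refine ⟨Real.log 2 / (-Real.log σ), div_pos (Real.log_pos one_lt_two) (by linarith), ?_⟩
  intro n m f g δ hδmem t ht ψ hl1 hsum0 hcorr _hortho p hp z
  obtain ⟨hδ0, hδ2⟩ := hδmem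
  -- basic facts about mu
  have hmu_nonneg : ∀ b y, 0 ≤ mu ψ b y := by
    intro b y
    unfold mu
    split_ifs with h1 h2 h3 <;> try positivity
    all_goals linarith [abs_nonneg (ψ y)]
  have hmu_true : ∀ y, mu ψ true y = ψ y + |ψ y| := by
    intro y
    unfold mu
    simp only [if_true]
    split_ifs with h
    · rw [abs_of_pos h]; ring
    · push_neg at h; rw [abs_of_nonpos h]; ring
  have hmu_false : ∀ y, mu ψ false y = |ψ y| - ψ y := by
    intro y
    unfold mu
    simp only [Bool.false_eq_true, if_false]
    split_ifs with h
    · rw [abs_of_neg h]; ring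
    · push_neg at h; rw [abs_of_nonneg h]; ring
  have hmu_sum : ∀ b, ∑ y, mu ψ b y = 1 := by
    intro b; cases b
    · rw [Finset.sum_congr rfl fun y _ => hmu_false y, Finset.sum_sub_distrib, hl1, hsum0]; ring
    · rw [Finset.sum_congr rfl fun y _ => hmu_true y, Finset.sum_add_distrib, hl1, hsum0]; ring
  -- error probabilities
  have hψrep : ∀ y, ψ y = (mu ψ true y - mu ψ false y) / 2 := by
    intro y; rw [hmu_true, hmu_false]; ring
  set A := ∑ y, mu ψ true y * boolToReal (g y) with hA
  set B := ∑ y, mu ψ false y * boolToReal (g y) with hB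
  have hbool01 : ∀ b : Bool, 0 ≤ boolToReal b ∧ boolToReal b ≤ 1 := by
    intro b; cases b <;> simp [boolToReal]
  have hcorr' : (1 - ε) / 2 < (A - B) / 2 := by
    have heq : ∑ y, ψ y * boolToReal (g y) = (A - B) / 2 := by
      rw [hA, hB, ← Finset.sum_sub_distrib, Finset.sum_div]
      refine Finset.sum_congr rfl fun y _ => ?_
      rw [hψrep y]; ring
    rw [← heq]; exact hcorr
  have hB0 : 0 ≤ B := Finset.sum_nonneg fun y _ =>
    mul_nonneg (hmu_nonneg _ _) (hbool01 (g y)).1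
  have hA1 : A ≤ 1 := by
    calc A ≤ ∑ y, mu ψ true y := Finset.sum_le_sum fun y _ => by
          nlinarith [hmu_nonneg true y, (hbool01 (g y)).1, (hbool01 (g y)).2]
      _ = 1 := hmu_sum true
  have herr : ∀ b, ∑ y, mu ψ b y * (if g y = b then (0:ℝ) else 1) ≤ ε := by
    intro b; cases b
    · have : ∑ y, mu ψ false y * (if g y = false then (0:ℝ) else 1) = B := by
        rw [hB]
        refine Finset.sum_congr rfl fun y _ => ?_
        cases hgy : g y <;> simp [hgy, boolToReal]
      rw [this]; linarith
    · have : ∑ y, mu ψ true y * (if g y = true then (0:ℝ) else 1)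
          = (∑ y, mu ψ true y) - A := by
        rw [hA, ← Finset.sum_sub_distrib]
        refine Finset.sum_congr rfl fun y _ => ?_
        cases hgy : g y <;> simp [hgy, boolToReal]
      rw [this, hmu_sum true]; linarith
  -- the MGF weight a
  set a : ℝ := Real.sqrt ((1 - ε) / ε) with hadef
  have ha0 : 0 < a := Real.sqrt_pos.2 (div_pos (by linarith) hε0)
  have ha2 : a ^ 2 = (1 - ε) / ε := Real.sq_sqrt (div_pos (by linarith) hε0).le
  have ha2' : a ^ 2 * ε = 1 - ε := by rw [ha2]; field_simp
  have ha1 : 1 ≤ a := by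
    have h1 : (1:ℝ) ≤ (1 - ε) / ε := (one_le_div hε0).2 (by linarith)
    calc (1:ℝ) = Real.sqrt 1 := Real.sqrt_one.symm
      _ ≤ a := Real.sqrt_le_sqrt h1
  have hainv : a⁻¹ ≤ a := le_trans (inv_le_one_of_one_le₀ ha1) ha1
  have h2ae : 2 * a * ε = σ := by
    have h1 : (2 * a * ε) ^ 2 = σ ^ 2 := by rw [hσsq]; nlinarith [ha2']
    rw [← Real.sqrt_sq (by positivity : (0:ℝ) ≤ 2 * a * ε), h1, Real.sqrt_sq hσ0.le]
  have hσa : a⁻¹ * (1 - ε) + a * ε = σ := by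
    have hinv : a⁻¹ * (1 - ε) = a * ε := by
      rw [← ha2']; field_simp
    rw [hinv]; linarith
  -- key single-sample MGF bound
  have hkey : ∀ b, (0 ≤ ∑ y, mu ψ b y * (if g y = b then a⁻¹ else a)) ∧
      (∑ y, mu ψ b y * (if g y = b then a⁻¹ else a)) ≤ σ := by
    intro b
    constructor
    · refine Finset.sum_nonneg fun y _ => mul_nonneg (hmu_nonneg _ _) ?_
      split_ifs
      · positivity
      · exact ha0.le
    · have hpt : ∀ y, mu ψ b y * (if g y = b then a⁻¹ else a)
          = mu ψ b y * a⁻¹ + (a - a⁻¹) * (mu ψ b y * (if g y = b then (0:ℝ) else 1)) := by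
        intro y; split_ifs <;> ring
      rw [Finset.sum_congr rfl fun y _ => hpt y, Finset.sum_add_distrib,
        ← Finset.sum_mul, ← Finset.mul_sum, hmu_sum b]
      have h1 := herr b
      have h2 : 0 ≤ ∑ y, mu ψ b y * (if g y = b then (0:ℝ) else 1) :=
        Finset.sum_nonneg fun y _ => mul_nonneg (hmu_nonneg _ _) (by split_ifs <;> norm_num)
      nlinarith [mul_le_mul_of_nonneg_left h1 (sub_nonneg.2 hainv)]
  -- per-row failure bound
  have hrow : ∀ b : Bool, ∑ r : Fin t → Fin m → Bool,
      (∏ j, mu ψ b (r j)) * (if MAJ t (fun j => g (r j)) = b then (0:ℝ) else 1) ≤ σ ^ t := by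
    intro b
    have hub : ∀ r : Fin t → Fin m → Bool,
        (if MAJ t (fun j => g (r j)) = b then (0:ℝ) else 1)
          ≤ ∏ j, (if g (r j) = b then a⁻¹ else a) := by
      intro r
      have hprodpos : (0:ℝ) < ∏ j, (if g (r j) = b then a⁻¹ else a) :=
        Finset.prod_pos fun j _ => by split_ifs; exacts [inv_pos.2 ha0, ha0]
      by_cases hM : MAJ t (fun j => g (r j)) = b
      · simp only [hM, if_true]; exact hprodpos.le
      · simp only [hM, if_false]
        have hSc : (Finset.univ.filter (fun j => ¬ (g (r j) = b))).card
            = t - (Finset.univ.filter (fun j => g (r j) = b)).card := by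
          rw [Finset.filter_not, Finset.card_sdiff_of_subset (Finset.filter_subset _ _),
            Finset.card_univ, Fintype.card_fin]
        have hSle : (Finset.univ.filter (fun j => g (r j) = b)).card ≤ t :=
          le_trans (Finset.card_filter_le _ _) (by simp)
        have htf : (Finset.univ.filter (fun j => g (r j) = true)).card
            + (Finset.univ.filter (fun j => g (r j) = false)).card = t := by
          have h := Finset.card_filter_add_card_filter_not
            (s := (Finset.univ : Finset (Fin t))) (p := fun j => g (r j) = true)
          simp only [Finset.card_univ, Fintype.card_fin] at h
          have h2 : (Finset.univ.filter (fun j => ¬ (g (r j) = true)))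
              = (Finset.univ.filter (fun j => g (r j) = false)) := by
            apply Finset.filter_congr; intro j _; simp
          rw [h2] at h; exact h
        have hcard : (Finset.univ.filter (fun j => g (r j) = b)).card
            ≤ t - (Finset.univ.filter (fun j => g (r j) = b)).card := by
          cases b
          · -- b = false, so MAJ = true : t < 2 * #true
            have hMt : MAJ t (fun j => g (r j)) = true := by
              cases hM2 : MAJ t (fun j => g (r j))
              · exact absurd hM2 hM
              · rfl
            unfold MAJ at hMt
            simp only [decide_eq_true_eq] at hMt
            omega
          · -- b = true, so MAJ = false : ¬ (t < 2 * #true)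
            have hMt : MAJ t (fun j => g (r j)) = false := by
              cases hM2 : MAJ t (fun j => g (r j))
              · rfl
              · exact absurd hM2 hM
            unfold MAJ at hMt
            simp only [decide_eq_false_iff_not] at hMt
            omega
        have hprod : ∏ j, (if g (r j) = b then a⁻¹ else a)
            = a⁻¹ ^ (Finset.univ.filter (fun j => g (r j) = b)).card
              * a ^ (t - (Finset.univ.filter (fun j => g (r j) = b)).card) := by
          rw [← Finset.prod_filter_mul_prod_filter_not Finset.univ (fun j => g (r j) = b)]
          rw [Finset.prod_congr rfl (fun j hj => if_pos (Finset.mem_filter.1 hj).2),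
            Finset.prod_congr rfl (fun j hj => if_neg (Finset.mem_filter.1 hj).2),
            Finset.prod_const, Finset.prod_const, hSc]
        calc (1:ℝ) = a⁻¹ ^ (Finset.univ.filter (fun j => g (r j) = b)).card
              * a ^ (Finset.univ.filter (fun j => g (r j) = b)).card := by
              rw [← mul_pow, inv_mul_cancel₀ ha0.ne', one_pow]
          _ ≤ a⁻¹ ^ (Finset.univ.filter (fun j => g (r j) = b)).card
              * a ^ (t - (Finset.univ.filter (fun j => g (r j) = b)).card) := by
              exact mul_le_mul_of_nonneg_left (pow_le_pow_right₀ ha1 hcard) (by positivity)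
          _ = ∏ j, (if g (r j) = b then a⁻¹ else a) := hprod.symm
    calc ∑ r : Fin t → Fin m → Bool,
          (∏ j, mu ψ b (r j)) * (if MAJ t (fun j => g (r j)) = b then (0:ℝ) else 1)
        ≤ ∑ r : Fin t → Fin m → Bool,
          (∏ j, mu ψ b (r j)) * ∏ j, (if g (r j) = b then a⁻¹ else a) := by
          refine Finset.sum_le_sum fun r _ => ?_
          exact mul_le_mul_of_nonneg_left (hub r)
            (Finset.prod_nonneg fun j _ => hmu_nonneg _ _)
      _ = ∑ r : Fin t → Fin m → Bool, ∏ j, (mu ψ b (r j) * (if g (r j) = b then a⁻¹ else a)) := by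
          refine Finset.sum_congr rfl fun r _ => ?_
          rw [Finset.prod_mul_distrib]
      _ = ∏ _j : Fin t, ∑ y : Fin m → Bool, mu ψ b y * (if g y = b then a⁻¹ else a) :=
          sum_prod_fn_aux (fun _ y => mu ψ b y * (if g y = b then a⁻¹ else a))
      _ = (∑ y : Fin m → Bool, mu ψ b y * (if g y = b then a⁻¹ else a)) ^ t := by
          rw [Finset.prod_const, Finset.card_univ, Fintype.card_fin]
      _ ≤ σ ^ t := pow_le_pow_left₀ (hkey b).1 (hkey b).2 t
  -- global setup
  have hrowsum : ∀ b, ∑ r : Fin t → Fin m → Bool, ∏ j, mu ψ b (r j) = 1 := by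
    intro b
    rw [sum_prod_fn_aux (fun _ y => mu ψ b y)]
    simp [hmu_sum b]
  set W : (Fin n → Fin t → Fin m → Bool) → ℝ := fun x => ∏ i, ∏ j, mu ψ (z i) (x i j) with hWdef
  have hW0 : ∀ x, 0 ≤ W x := fun x =>
    Finset.prod_nonneg fun i _ => Finset.prod_nonneg fun j _ => hmu_nonneg _ _
  have hW1 : ∑ x, W x = 1 := by
    rw [hWdef]
    rw [sum_prod_fn_aux (fun (i : Fin n) (r : Fin t → Fin m → Bool) => ∏ j, mu ψ (z i) (r j))]
    simp [hrowsum]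
  set G : (Fin n → Fin t → Fin m → Bool) → Fin n → Bool :=
    fun x i => MAJ t (fun j => g (x i j)) with hGdef
  -- pointwise bound
  have hpt : ∀ x : Fin n → Fin t → Fin m → Bool,
      |MvPolynomial.eval (tripleEmbed x) p - boolToReal (f z)|
        ≤ ε + (if G x = z then (0:ℝ) else 1) := by
    intro x
    have hemb : tripleEmbed x = embed (fun idx =>
      x (finProdFinEquiv.symm idx).1
        (finProdFinEquiv.symm ((finProdFinEquiv.symm idx).2 : Fin (t * m))).1
        (finProdFinEquiv.symm ((finProdFinEquiv.symm idx).2 : Fin (t * m))).2) := rfl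
    have hcompo : bcomp f (bcomp (MAJ t) g) (fun idx =>
        x (finProdFinEquiv.symm idx).1
          (finProdFinEquiv.symm ((finProdFinEquiv.symm idx).2 : Fin (t * m))).1
          (finProdFinEquiv.symm ((finProdFinEquiv.symm idx).2 : Fin (t * m))).2)
        = f (G x) := by
      rw [hGdef]
      unfold bcomp
      congr 1
      funext i
      congr 1
      funext j
      congr 1
      funext k
      simp
    have h1 := hp (fun idx =>
      x (finProdFinEquiv.symm idx).1
        (finProdFinEquiv.symm ((finProdFinEquiv.symm idx).2 : Fin (t * m))).1
        (finProdFinEquiv.symm ((finProdFinEquiv.symm idx).2 : Fin (t * m))).2)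
    rw [hemb]
    set xf : Fin (n * (t * m)) → Bool := (fun idx =>
      x (finProdFinEquiv.symm idx).1
        (finProdFinEquiv.symm ((finProdFinEquiv.symm idx).2 : Fin (t * m))).1
        (finProdFinEquiv.symm ((finProdFinEquiv.symm idx).2 : Fin (t * m))).2) with hxf
    calc |MvPolynomial.eval (embed xf) p - boolToReal (f z)|
        ≤ |MvPolynomial.eval (embed xf) p - boolToReal (bcomp f (bcomp (MAJ t) g) xf)|
          + |boolToReal (bcomp f (bcomp (MAJ t) g) xf) - boolToReal (f z)| :=
          abs_sub_le _ _ _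
      _ ≤ ε + (if G x = z then (0:ℝ) else 1) := by
          refine add_le_add h1 ?_
          rw [hcompo]
          split_ifs with hGz
          · rw [hGz]; simp
          · exact boolToReal_diff_le _ _
  -- main bound
  have hmain : |Lop ψ p z - boolToReal (f z)|
      ≤ ε + ∑ x, W x * (if G x = z then (0:ℝ) else 1) := by
    have hrepr : Lop ψ p z - boolToReal (f z)
        = ∑ x, W x * (MvPolynomial.eval (tripleEmbed x) p - boolToReal (f z)) := by
      unfold Lop
      rw [show ∑ x, W x * (MvPolynomial.eval (tripleEmbed x) p - boolToReal (f z))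
          = (∑ x, W x * MvPolynomial.eval (tripleEmbed x) p)
            - (∑ x, W x) * boolToReal (f z) by
        rw [Finset.sum_mul, ← Finset.sum_sub_distrib]
        exact Finset.sum_congr rfl fun x _ => by ring]
      rw [hW1, one_mul]
    rw [hrepr]
    calc |∑ x, W x * (MvPolynomial.eval (tripleEmbed x) p - boolToReal (f z))|
        ≤ ∑ x, |W x * (MvPolynomial.eval (tripleEmbed x) p - boolToReal (f z))| :=
          Finset.abs_sum_le_sum_abs _ _
      _ ≤ ∑ x, W x * (ε + (if G x = z then (0:ℝ) else 1)) := by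
          refine Finset.sum_le_sum fun x _ => ?_
          rw [abs_mul, abs_of_nonneg (hW0 x)]
          exact mul_le_mul_of_nonneg_left (hpt x) (hW0 x)
      _ = ε * (∑ x, W x) + ∑ x, W x * (if G x = z then (0:ℝ) else 1) := by
          rw [Finset.mul_sum, ← Finset.sum_add_distrib]
          exact Finset.sum_congr rfl fun x _ => by ring
      _ = ε + ∑ x, W x * (if G x = z then (0:ℝ) else 1) := by rw [hW1, mul_one]
  -- union bound
  have hunion : ∀ x, (if G x = z then (0:ℝ) else 1)
      ≤ ∑ i, (if MAJ t (fun j => g (x i j)) = z i then (0:ℝ) else 1) := by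
    intro x
    by_cases h : G x = z
    · rw [if_pos h]
      exact Finset.sum_nonneg fun i _ => by split_ifs <;> norm_num
    · rw [if_neg h]
      obtain ⟨i, hi⟩ : ∃ i, G x i ≠ z i := by
        by_contra hc
        push_neg at hc
        exact h (funext hc)
      have h1 : (if MAJ t (fun j => g (x i j)) = z i then (0:ℝ) else 1) = 1 := by
        rw [if_neg]
        rw [hGdef] at hi
        exact hi
      calc (1:ℝ) = (if MAJ t (fun j => g (x i j)) = z i then (0:ℝ) else 1) := h1.symm
        _ ≤ ∑ i, (if MAJ t (fun j => g (x i j)) = z i then (0:ℝ) else 1) :=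
            Finset.single_le_sum
              (f := fun i => (if MAJ t (fun j => g (x i j)) = z i then (0:ℝ) else 1))
              (fun i _ => by split_ifs <;> norm_num) (Finset.mem_univ i)
  -- per-coordinate failure
  have hfail_i : ∀ i, ∑ x, W x * (if MAJ t (fun j => g (x i j)) = z i then (0:ℝ) else 1)
      ≤ σ ^ t := by
    intro i
    have hrepr : ∀ x : Fin n → Fin t → Fin m → Bool,
        W x * (if MAJ t (fun j => g (x i j)) = z i then (0:ℝ) else 1)
        = ∏ i', ((∏ j, mu ψ (z i') (x i' j))
            * (if i' = i then (if MAJ t (fun j => g (x i' j)) = z i' then (0:ℝ) else 1) else 1)) := by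
      intro x
      rw [Finset.prod_mul_distrib, hWdef]
      congr 1
      rw [Fintype.prod_ite_eq' i
        (fun i' => (if MAJ t (fun j => g (x i' j)) = z i' then (0:ℝ) else 1))]
    rw [Finset.sum_congr rfl fun x _ => hrepr x]
    rw [sum_prod_fn_aux (fun (i' : Fin n) (r : Fin t → Fin m → Bool) => (∏ j, mu ψ (z i') (r j))
      * (if i' = i then (if MAJ t (fun j => g (r j)) = z i' then (0:ℝ) else 1) else 1))]
    have hT1 : ∀ i', i' ≠ i → (∑ r : Fin t → Fin m → Bool, (∏ j, mu ψ (z i') (r j))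
        * (if i' = i then (if MAJ t (fun j => g (r j)) = z i' then (0:ℝ) else 1) else 1)) = 1 := by
      intro i' hi'
      simp only [if_neg hi', mul_one]
      exact hrowsum (z i')
    have hTpos : ∀ i', 0 ≤ ∑ r : Fin t → Fin m → Bool, (∏ j, mu ψ (z i') (r j))
        * (if i' = i then (if MAJ t (fun j => g (r j)) = z i' then (0:ℝ) else 1) else 1) := by
      intro i'
      refine Finset.sum_nonneg fun r _ => mul_nonneg
        (Finset.prod_nonneg fun j _ => hmu_nonneg _ _) ?_
      split_ifs <;> norm_num
    -- rewrite the product using ite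
    have hcong : ∀ i' ∈ Finset.univ, (∑ r : Fin t → Fin m → Bool, (∏ j, mu ψ (z i') (r j))
          * (if i' = i then (if MAJ t (fun j => g (r j)) = z i' then (0:ℝ) else 1) else 1))
        = (if i' = i then ∑ r : Fin t → Fin m → Bool, (∏ j, mu ψ (z i) (r j))
            * (if MAJ t (fun j => g (r j)) = z i then (0:ℝ) else 1) else 1) := by
      intro i' _
      by_cases hi' : i' = i
      · subst hi'
        simp
      · simp only [if_neg hi', mul_one]
        exact hrowsum (z i')
    rw [Finset.prod_congr rfl hcong,
      Fintype.prod_ite_eq' i (fun _ => ∑ r : Fin t → Fin m → Bool,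
        (∏ j, mu ψ (z i) (r j)) * (if MAJ t (fun j => g (r j)) = z i then (0:ℝ) else 1))]
    exact hrow (z i)
  -- combine: failure probability at most n * σ^t
  have hfailsum : ∑ x, W x * (if G x = z then (0:ℝ) else 1) ≤ (n : ℝ) * σ ^ t := by
    calc ∑ x, W x * (if G x = z then (0:ℝ) else 1)
        ≤ ∑ x, W x * ∑ i, (if MAJ t (fun j => g (x i j)) = z i then (0:ℝ) else 1) := by
          refine Finset.sum_le_sum fun x _ => ?_
          exact mul_le_mul_of_nonneg_left (hunion x) (hW0 x)
      _ = ∑ i, ∑ x, W x * (if MAJ t (fun j => g (x i j)) = z i then (0:ℝ) else 1) := by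
          rw [Finset.sum_comm]
          refine Finset.sum_congr rfl fun x _ => ?_
          rw [Finset.mul_sum]
      _ ≤ ∑ _i : Fin n, σ ^ t := Finset.sum_le_sum fun i _ => hfail_i i
      _ = (n : ℝ) * σ ^ t := by rw [Finset.sum_const, Finset.card_univ, Fintype.card_fin,
          nsmul_eq_mul]
  -- the quantity n σ^t is at most δ
  have hnσ : (n : ℝ) * σ ^ t ≤ δ := by
    rcases Nat.eq_zero_or_pos n with hn0 | hn
    · subst hn0; simp; positivity
    · have hn0 : (0:ℝ) < n := by exact_mod_cast hn
      have hlog2 : (0:ℝ) < Real.log 2 := Real.log_pos one_lt_two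
      have hstep : Real.log 2 * (Real.logb 2 (n : ℝ) + Real.logb 2 (1 / δ))
          ≤ (t : ℝ) * (-Real.log σ) := by
        have h1 : Real.log 2 / (-Real.log σ) * (Real.logb 2 (n : ℝ) + Real.logb 2 (1 / δ))
            * (-Real.log σ) ≤ (t : ℝ) * (-Real.log σ) :=
          mul_le_mul_of_nonneg_right ht (by linarith)
        calc Real.log 2 * (Real.logb 2 (n : ℝ) + Real.logb 2 (1 / δ))
            = Real.log 2 / (-Real.log σ) * (Real.logb 2 (n : ℝ) + Real.logb 2 (1 / δ))
              * (-Real.log σ) := by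
              have hne : Real.log σ ≠ 0 := ne_of_lt hlogσ
              field_simp
          _ ≤ (t : ℝ) * (-Real.log σ) := h1
      have hlogb : Real.log 2 * (Real.logb 2 (n : ℝ) + Real.logb 2 (1 / δ))
          = Real.log (n : ℝ) - Real.log δ := by
        unfold Real.logb
        rw [mul_add, mul_div_cancel₀ _ hlog2.ne', mul_div_cancel₀ _ hlog2.ne',
          one_div, Real.log_inv]
        ring
      rw [hlogb] at hstep
      have hlogle : Real.log (σ ^ t) ≤ Real.log (δ / ↑n) := by
        rw [Real.log_pow, Real.log_div hδ0.ne' hn0.ne']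
        push_cast
        nlinarith [hstep]
      have := (Real.log_le_log_iff (pow_pos hσ0 t) (div_pos hδ0 hn0)).1 hlogle
      rw [le_div_iff₀ hn0] at this
      linarith [this]
  calc |Lop ψ p z - boolToReal (f z)|
      ≤ ε + ∑ x, W x * (if G x = z then (0:ℝ) else 1) := hmain
    _ ≤ ε + (n : ℝ) * σ ^ t := by linarith
    _ ≤ ε + δ := by linarith
    _ = δ + ε := by ring
end

section
/- Let t ≥ 2 and let h : {0,1}^t → {0,1} be a Boolean function that depends on all t of its variables and is not equal to PARITY_t nor to ¬PARITY_t. Then h has a minimal sensitive block of size 2: there exist x ∈ {0,1}^t and distinct indices i, j ∈ {1,…,t} such that h(x) = h(x^{⊕{i}}) = h(x^{⊕{j}}) and h(x) ≠ h(x^{⊕{i,j}}). -/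
open MvPolynomial Finset

lemma flip1_apply {t : ℕ} (x : Fin t → Bool) (i k : Fin t) :
    flip1 x i k = if k = i then !(x i) else x k := by
  simp [flip1, Function.update]

lemma flip1_self {t : ℕ} (x : Fin t → Bool) (i : Fin t) :
    flip1 (flip1 x i) i = x := by
  funext k
  simp only [flip1_apply]
  split <;> simp_all

lemma flip1_comm {t : ℕ} (x : Fin t → Bool) {i j : Fin t} (hij : i ≠ j) :
    flip1 (flip1 x i) j = flip1 (flip1 x j) i := by
  funext k
  simp [flip1_apply, hij, hij.symm]
  split <;> split <;> simp_all

lemma filter_flip {t : ℕ} (x : Fin t → Bool) (i : Fin t) :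
    (univ.filter fun k => flip1 x i k = true) =
      if x i = true then (univ.filter fun k => x k = true).erase i
      else insert i (univ.filter fun k => x k = true) := by
  split <;> rename_i hx <;> ext k <;> by_cases hk : k = i <;>
    simp [flip1_apply, hk, hx] <;> simp_all

lemma PARITYf_flip {t : ℕ} (x : Fin t → Bool) (i : Fin t) :
    PARITYf t (flip1 x i) = !(PARITYf t x) := by
  unfold PARITYf
  rw [filter_flip]
  set c := (univ.filter fun k => x k = true).card with hc
  cases hx : x i
  · have hni : i ∉ (univ.filter fun k => x k = true) := by simp [hx]
    rw [if_neg (by simp [hx]), card_insert_of_notMem hni]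
    simp only [← decide_not]
    exact decide_eq_decide.mpr (by omega)
  · have hni : i ∈ (univ.filter fun k => x k = true) := by simp [hx]
    have hc1 : 1 ≤ c := card_pos.mpr ⟨i, hni⟩
    rw [if_pos rfl, card_erase_of_mem hni]
    simp only [← decide_not]
    exact decide_eq_decide.mpr (by omega)

lemma flip_invariant_const {t : ℕ} (s : (Fin t → Bool) → Bool)
    (hs : ∀ x j, s (flip1 x j) = s x) (x y : Fin t → Bool) : s x = s y := by
  suffices H : ∀ n (x y : Fin t → Bool),
      (univ.filter fun k => ¬ x k = y k).card = n → s x = s y from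
    H _ x y rfl
  intro n
  induction n with
  | zero =>
    intro x y hcard
    have hxy : x = y := by
      funext k
      by_contra hk
      have : k ∈ (univ.filter fun k => ¬ x k = y k) := by simp [hk]
      rw [card_eq_zero] at hcard
      simp [hcard] at this
    rw [hxy]
  | succ n ih =>
    intro x y hcard
    have hpos : (univ.filter fun k => ¬ x k = y k).Nonempty := by
      rw [← card_pos, hcard]; omega
    obtain ⟨k, hk⟩ := hpos
    simp only [mem_filter, mem_univ, true_and] at hk
    have hk' : (!(x k)) = y k := by revert hk; cases x k <;> cases y k <;> simp
    have hfe : (univ.filter fun m => ¬ flip1 x k m = y m) =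
        (univ.filter fun m => ¬ x m = y m).erase k := by
      ext m
      by_cases hm : m = k <;> simp [flip1_apply, hm, hk, hk']
    have : s (flip1 x k) = s y := by
      apply ih
      rw [hfe, card_erase_of_mem (by simp [hk]), hcard]
      omega
    rw [← this, hs]

/-- every Boolean function depending on all its (≥ 2) variables that is
not parity nor its negation has a minimal sensitive block of size 2. -/
theorem stmt_9 (t : ℕ) (ht : 2 ≤ t) (h : (Fin t → Bool) → Bool)
    (hdep : ∀ i : Fin t, ∃ x : Fin t → Bool, h x ≠ h (flip1 x i))
    (hpar : h ≠ PARITYf t)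
    (hnpar : h ≠ fun x => !(PARITYf t x)) :
    ∃ (x : Fin t → Bool) (i j : Fin t), i ≠ j ∧
      h x = h (flip1 x i) ∧
      h x = h (flip1 x j) ∧
      h x ≠ h (flip1 (flip1 x i) j) := by
  by_cases H : ∀ (x : Fin t → Bool) (i j : Fin t), i ≠ j →
      (h x == h (flip1 x i)) = (h (flip1 x j) == h (flip1 (flip1 x j) i))
  · exfalso
    have hsens : ∀ (i : Fin t) (x : Fin t → Bool), h x ≠ h (flip1 x i) := by
      intro i x
      have hs : ∀ (y : Fin t → Bool) (j : Fin t),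
          (fun z => h z == h (flip1 z i)) (flip1 y j) = (fun z => h z == h (flip1 z i)) y := by
        intro y j
        by_cases hji : j = i
        · subst hji
          simp only [flip1_self]
          exact Bool.beq_comm
        · exact (H y i j (fun hh => hji hh.symm)).symm
      obtain ⟨x0, hx0⟩ := hdep i
      have hconst := flip_invariant_const (fun z => h z == h (flip1 z i)) hs x x0
      intro hx
      have h1 : (h x == h (flip1 x i)) = true := by rw [hx]; simp
      rw [hconst] at h1
      exact hx0 (by simpa using h1)
    have key : ∀ x, h x = Bool.xor (PARITYf t x) (h (fun _ => false)) := by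
      suffices H2 : ∀ n (x : Fin t → Bool), (univ.filter fun k => x k = true).card = n →
          h x = Bool.xor (PARITYf t x) (h (fun _ => false)) from fun x => H2 _ x rfl
      intro n
      induction n with
      | zero =>
        intro x hx
        have hx0 : x = fun _ => false := by
          funext k
          by_contra hk
          have hk' : x k = true := by revert hk; cases x k <;> simp
          have : k ∈ (univ.filter fun k => x k = true) := by simp [hk']
          rw [card_eq_zero] at hx
          simp [hx] at this
        subst hx0
        have hp0 : PARITYf t (fun _ => false) = false := by
          simp [PARITYf]
        rw [hp0]
        simp
      | succ n ih =>
        intro x hx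
        have hpos : (univ.filter fun k => x k = true).Nonempty := by
          rw [← card_pos, hx]; omega
        obtain ⟨i, hi⟩ := hpos
        simp only [mem_filter, mem_univ, true_and] at hi
        have hy : (univ.filter fun k => flip1 x i k = true).card = n := by
          rw [filter_flip, if_pos hi, card_erase_of_mem (by simp [hi]), hx]
          omega
        have hih := ih (flip1 x i) hy
        have hxflip : h x ≠ h (flip1 x i) := hsens i x
        have hpflip : PARITYf t x = !(PARITYf t (flip1 x i)) := by
          conv_lhs => rw [← flip1_self x i, PARITYf_flip]
        rw [hpflip]
        revert hxflip
        rw [hih]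
        cases PARITYf t (flip1 x i) <;> cases h (fun _ : Fin t => false) <;>
          cases h x <;> simp
    cases hc : h (fun _ => false)
    · apply hpar
      funext x
      rw [key x, hc]
      simp
    · apply hnpar
      funext x
      rw [key x, hc]
      simp
  · push_neg at H
    obtain ⟨x, i, j, hij, hne⟩ := H
    have e1 : flip1 (flip1 x i) j = flip1 (flip1 x j) i := flip1_comm x hij
    have e2 : flip1 (flip1 x i) i = x := flip1_self x i
    have e3 : flip1 (flip1 x j) j = x := flip1_self x j
    have e4 : flip1 (flip1 (flip1 x j) i) i = flip1 x j := flip1_self (flip1 x j) i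
    have e5 : flip1 (flip1 (flip1 x j) i) j = flip1 x i := by
      rw [flip1_comm (flip1 x j) hij, flip1_self]
    cases hA : h x <;> cases hB : h (flip1 x i) <;> cases hC : h (flip1 x j) <;>
      cases hD : h (flip1 (flip1 x j) i) <;>
      simp only [hA, hB, hC, hD] at hne <;>
      first
      | exact absurd rfl hne
      | (refine ⟨x, i, j, hij, ?_, ?_, ?_⟩ <;> (simp [e1, e2, e3, e4, e5, hA, hB, hC, hD]; done))
      | (refine ⟨flip1 x i, i, j, hij, ?_, ?_, ?_⟩ <;> (simp [e1, e2, e3, e4, e5, hA, hB, hC, hD]; done))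
      | (refine ⟨flip1 x j, i, j, hij, ?_, ?_, ?_⟩ <;> (simp [e1, e2, e3, e4, e5, hA, hB, hC, hD]; done))
      | (refine ⟨flip1 (flip1 x j) i, i, j, hij, ?_, ?_, ?_⟩ <;> (simp [e1, e2, e3, e4, e5, hA, hB, hC, hD]; done))
end

section
/- Let t ≥ 2 and let h : {0,1}^t → {0,1} be a Boolean function that depends on all t of its variables and is not equal to any of PARITY_t, ¬PARITY_t, AND_t, OR_t. Then AND_2 can be obtained by setting all but two variables to constants in h^k for some k ≤ 3: there exist k ∈ {1,2,3}, two distinct input coordinates u ≠ v of h^k : {0,1}^{t^k} → {0,1}, and a point a ∈ {0,1}^{t^k} such that for all x, y ∈ {0,1}, h^k evaluated at the input that agrees with a on all coordinates except that coordinate u is set to x and coordinate v is set to y, equals x ∧ y. The same statement holds with x ∧ y replaced by x ∨ y (for possibly different k ≤ 3, coordinates, and point a). -/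
open MvPolynomial Finset

namespace Stmt10

def Sub1 {N : ℕ} (F : (Fin N → Bool) → Bool) (s : Bool → Bool) : Prop :=
  ∃ u : Fin N, ∃ a : Fin N → Bool,
    ∀ x, F (fun w => if w = u then x else a w) = s x

def Sub2 {N : ℕ} (F : (Fin N → Bool) → Bool) (g : Bool → Bool → Bool) : Prop :=
  ∃ u v : Fin N, u ≠ v ∧ ∃ a : Fin N → Bool,
    ∀ x y, F (fun w => if w = u then x else if w = v then y else a w) = g x y

def Surj {N : ℕ} (F : (Fin N → Bool) → Bool) : Prop := ∀ c : Bool, ∃ a, F a = c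

def wt {t : ℕ} (x : Fin t → Bool) : ℕ := (Finset.univ.filter fun i => x i = true).card

def pLe {t : ℕ} (x y : Fin t → Bool) : Prop := ∀ i, x i = true → y i = true

def MinT {t : ℕ} (h : (Fin t → Bool) → Bool) (m : Fin t → Bool) : Prop :=
  h m = true ∧ ∀ i, m i = true → h (Function.update m i false) = false

section Lib
variable {t : ℕ}


lemma sub1_congr {N : ℕ} {F : (Fin N → Bool) → Bool} {s s' : Bool → Bool}
    (hs : ∀ x, s x = s' x) (h : Sub1 F s) : Sub1 F s' := by
  obtain ⟨u, a, ha⟩ := h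
  exact ⟨u, a, fun x => (ha x).trans (hs x)⟩

lemma sub2_congr {N : ℕ} {F : (Fin N → Bool) → Bool} {g g' : Bool → Bool → Bool}
    (hs : ∀ x y, g x y = g' x y) (h : Sub2 F g) : Sub2 F g' := by
  obtain ⟨u, v, huv, a, ha⟩ := h
  exact ⟨u, v, huv, a, fun x y => (ha x y).trans (hs x y)⟩

lemma sub2_fix_right {N : ℕ} {F : (Fin N → Bool) → Bool} {g : Bool → Bool → Bool}
    (h : Sub2 F g) (c : Bool) : Sub1 F (fun x => g x c) := by
  obtain ⟨u, v, huv, a, ha⟩ := h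
  exact ⟨u, fun w => if w = v then c else a w, fun x => ha x c⟩

lemma sub1_precomp {M N : ℕ} (e : Fin M ≃ Fin N) {F : (Fin M → Bool) → Bool} {s}
    (hF : Sub1 F s) : Sub1 (fun x : Fin N → Bool => F (fun i => x (e i))) s := by
  obtain ⟨u, a, ha⟩ := hF
  refine ⟨e u, fun w => a (e.symm w), fun x => ?_⟩
  have : (fun i => (fun w => if w = e u then x else a (e.symm w)) (e i))
      = fun i => if i = u then x else a i := by
    funext i
    by_cases hi : i = u
    · simp [hi]
    · have : ¬ (e i = e u) := fun hc => hi (e.injective hc)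
      simp [this, hi]
  simpa [this] using ha x

lemma sub2_precomp {M N : ℕ} (e : Fin M ≃ Fin N) {F : (Fin M → Bool) → Bool} {g}
    (hF : Sub2 F g) : Sub2 (fun x : Fin N → Bool => F (fun i => x (e i))) g := by
  obtain ⟨u, v, huv, a, ha⟩ := hF
  refine ⟨e u, e v, fun hc => huv (e.injective hc), fun w => a (e.symm w), fun x y => ?_⟩
  have : (fun i => (fun w => if w = e u then x else if w = e v then y else a (e.symm w)) (e i))
      = fun i => if i = u then x else if i = v then y else a i := by
    funext i
    by_cases hi : i = u
    · simp [hi]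
    · have h1 : ¬ (e i = e u) := fun hc => hi (e.injective hc)
      by_cases hj : i = v
      · simp [h1, hj]
      · have h2 : ¬ (e i = e v) := fun hc => hj (e.injective hc)
        simp [h1, h2, hi, hj]
  simpa [this] using ha x y

lemma surj_precomp {M N : ℕ} (e : Fin M ≃ Fin N) {F : (Fin M → Bool) → Bool}
    (hF : Surj F) : Surj (fun x : Fin N → Bool => F (fun i => x (e i))) := by
  intro c
  obtain ⟨a, ha⟩ := hF c
  refine ⟨fun w => a (e.symm w), ?_⟩
  simpa using ha



lemma fpf_eq_iff {n m : ℕ} (i u : Fin n) (j v : Fin m) :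
    (finProdFinEquiv (i, j) = finProdFinEquiv (u, v)) ↔ (i = u ∧ j = v) := by
  constructor
  · intro hc
    have := finProdFinEquiv.injective hc
    exact ⟨congrArg Prod.fst this, congrArg Prod.snd this⟩
  · rintro ⟨rfl, rfl⟩; rfl

lemma bcomp_surj {n m : ℕ} {f : (Fin n → Bool) → Bool} {gI : (Fin m → Bool) → Bool}
    (hf : Surj f) (hg : Surj gI) : Surj (bcomp f gI) := by
  intro c
  obtain ⟨a, ha⟩ := hf c
  choose cc hcc using hg
  refine ⟨fun w => cc (a (finProdFinEquiv.symm w).1) (finProdFinEquiv.symm w).2, ?_⟩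
  unfold bcomp
  have : (fun i => gI fun j =>
      cc (a (finProdFinEquiv.symm (finProdFinEquiv (i, j))).1)
        (finProdFinEquiv.symm (finProdFinEquiv (i, j))).2) = a := by
    funext i
    have hsimp : ∀ j : Fin m, (finProdFinEquiv.symm (finProdFinEquiv (i, j))) = (i, j) := by
      intro j; exact Equiv.symm_apply_apply _ _
    calc gI (fun j => cc (a (finProdFinEquiv.symm (finProdFinEquiv (i, j))).1)
            (finProdFinEquiv.symm (finProdFinEquiv (i, j))).2)
        = gI (fun j => cc (a i) j) := by
          congr 1; funext j; rw [hsimp j]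
      _ = a i := hcc (a i)
  rw [this, ha]

lemma bcomp_sub2 {n m : ℕ} {f : (Fin n → Bool) → Bool} {gI : (Fin m → Bool) → Bool}
    {g2 : Bool → Bool → Bool} {s1 s2 : Bool → Bool}
    (hf : Sub2 f g2) (h1 : Sub1 gI s1) (h2 : Sub1 gI s2) (hs : Surj gI) :
    Sub2 (bcomp f gI) (fun x y => g2 (s1 x) (s2 y)) := by
  obtain ⟨u, v, huv, a, ha⟩ := hf
  obtain ⟨u1, a1, ha1⟩ := h1
  obtain ⟨u2, a2, ha2⟩ := h2
  choose cc hcc using hs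
  refine ⟨finProdFinEquiv (u, u1), finProdFinEquiv (v, u2), ?_, 
    fun w => (fun p : Fin n × Fin m =>
      if p.1 = u then a1 p.2 else if p.1 = v then a2 p.2 else cc (a p.1) p.2)
      (finProdFinEquiv.symm w), fun x y => ?_⟩
  · intro hc
    exact huv ((fpf_eq_iff u v u1 u2).mp hc).1
  · unfold bcomp
    have key : (fun i => gI fun j =>
        (fun w => if w = finProdFinEquiv (u, u1) then x
          else if w = finProdFinEquiv (v, u2) then y
          else (fun p : Fin n × Fin m =>
            if p.1 = u then a1 p.2 else if p.1 = v then a2 p.2 else cc (a p.1) p.2)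
            (finProdFinEquiv.symm w)) (finProdFinEquiv (i, j)))
        = fun i => if i = u then s1 x else if i = v then s2 y else a i := by
      funext i
      have hsymm : ∀ j : Fin m, (finProdFinEquiv.symm (finProdFinEquiv (i, j))) = (i, j) :=
        fun j => Equiv.symm_apply_apply _ _
      by_cases hi : i = u
      · subst hi
        have : (fun j => if finProdFinEquiv (i, j) = finProdFinEquiv (i, u1) then x
            else if finProdFinEquiv (i, j) = finProdFinEquiv (v, u2) then y
            else (fun p : Fin n × Fin m =>
              if p.1 = i then a1 p.2 else if p.1 = v then a2 p.2 else cc (a p.1) p.2)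
              (finProdFinEquiv.symm (finProdFinEquiv (i, j))))
            = fun j => if j = u1 then x else a1 j := by
          funext j
          rw [hsymm j]
          by_cases hj : j = u1
          · simp [hj, fpf_eq_iff]
          · have h1' : ¬ (finProdFinEquiv (i, j) = finProdFinEquiv (i, u1)) := by
              rw [fpf_eq_iff]; tauto
            have h2' : ¬ (finProdFinEquiv (i, j) = finProdFinEquiv (v, u2)) := by
              rw [fpf_eq_iff]; tauto
            simp [h1', h2', hj]
        rw [this, ha1]; simp
      · by_cases hv : i = v
        · subst hv
          have : (fun j => if finProdFinEquiv (i, j) = finProdFinEquiv (u, u1) then x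
              else if finProdFinEquiv (i, j) = finProdFinEquiv (i, u2) then y
              else (fun p : Fin n × Fin m =>
                if p.1 = u then a1 p.2 else if p.1 = i then a2 p.2 else cc (a p.1) p.2)
                (finProdFinEquiv.symm (finProdFinEquiv (i, j))))
              = fun j => if j = u2 then y else a2 j := by
            funext j
            rw [hsymm j]
            have h1' : ¬ (finProdFinEquiv (i, j) = finProdFinEquiv (u, u1)) := by
              rw [fpf_eq_iff]; tauto
            by_cases hj : j = u2
            · subst hj
              have h2' : finProdFinEquiv (i, j) = finProdFinEquiv (i, j) := rfl
              simp [h1', h2']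
            · have h2' : ¬ (finProdFinEquiv (i, j) = finProdFinEquiv (i, u2)) := by
                rw [fpf_eq_iff]; tauto
              simp [h1', h2', hj, hi]
          rw [this, ha2]; simp [hi]
        · have : (fun j => if finProdFinEquiv (i, j) = finProdFinEquiv (u, u1) then x
              else if finProdFinEquiv (i, j) = finProdFinEquiv (v, u2) then y
              else (fun p : Fin n × Fin m =>
                if p.1 = u then a1 p.2 else if p.1 = v then a2 p.2 else cc (a p.1) p.2)
                (finProdFinEquiv.symm (finProdFinEquiv (i, j))))
              = fun j => cc (a i) j := by
            funext j
            rw [hsymm j]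
            have h1' : ¬ (finProdFinEquiv (i, j) = finProdFinEquiv (u, u1)) := by
              rw [fpf_eq_iff]; tauto
            have h2' : ¬ (finProdFinEquiv (i, j) = finProdFinEquiv (v, u2)) := by
              rw [fpf_eq_iff]; tauto
            simp [h1', h2', hi, hv]
          rw [this, hcc]; simp [hi, hv]
    rw [key, ha]

lemma bcomp_sub1_outer {n m : ℕ} {f : (Fin n → Bool) → Bool} {gI : (Fin m → Bool) → Bool}
    {s : Bool → Bool} {g : Bool → Bool → Bool}
    (hf : Sub1 f s) (hg : Sub2 gI g) (hs : Surj gI) :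
    Sub2 (bcomp f gI) (fun x y => s (g x y)) := by
  obtain ⟨u, a, ha⟩ := hf
  obtain ⟨u2, v2, huv2, a2, ha2⟩ := hg
  choose cc hcc using hs
  refine ⟨finProdFinEquiv (u, u2), finProdFinEquiv (u, v2), ?_,
    fun w => (fun p : Fin n × Fin m =>
      if p.1 = u then a2 p.2 else cc (a p.1) p.2) (finProdFinEquiv.symm w), fun x y => ?_⟩
  · intro hc
    exact huv2 ((fpf_eq_iff u u u2 v2).mp hc).2
  · unfold bcomp
    have key : (fun i => gI fun j =>
        (fun w => if w = finProdFinEquiv (u, u2) then x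
          else if w = finProdFinEquiv (u, v2) then y
          else (fun p : Fin n × Fin m =>
            if p.1 = u then a2 p.2 else cc (a p.1) p.2) (finProdFinEquiv.symm w))
          (finProdFinEquiv (i, j)))
        = fun i => if i = u then g x y else a i := by
      funext i
      have hsymm : ∀ j : Fin m, (finProdFinEquiv.symm (finProdFinEquiv (i, j))) = (i, j) :=
        fun j => Equiv.symm_apply_apply _ _
      by_cases hi : i = u
      · subst hi
        have : (fun j => if finProdFinEquiv (i, j) = finProdFinEquiv (i, u2) then x
            else if finProdFinEquiv (i, j) = finProdFinEquiv (i, v2) then y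
            else (fun p : Fin n × Fin m =>
              if p.1 = i then a2 p.2 else cc (a p.1) p.2)
              (finProdFinEquiv.symm (finProdFinEquiv (i, j))))
            = fun j => if j = u2 then x else if j = v2 then y else a2 j := by
          funext j
          rw [hsymm j]
          by_cases hj : j = u2
          · simp [hj, fpf_eq_iff]
          · have h1' : ¬ (finProdFinEquiv (i, j) = finProdFinEquiv (i, u2)) := by
              rw [fpf_eq_iff]; tauto
            by_cases hj2 : j = v2
            · simp [h1', hj2, fpf_eq_iff]
            · have h2' : ¬ (finProdFinEquiv (i, j) = finProdFinEquiv (i, v2)) := by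
                rw [fpf_eq_iff]; tauto
              simp [h1', h2', hj, hj2]
        rw [this, ha2]; simp
      · have : (fun j => if finProdFinEquiv (i, j) = finProdFinEquiv (u, u2) then x
            else if finProdFinEquiv (i, j) = finProdFinEquiv (u, v2) then y
            else (fun p : Fin n × Fin m =>
              if p.1 = u then a2 p.2 else cc (a p.1) p.2)
              (finProdFinEquiv.symm (finProdFinEquiv (i, j))))
            = fun j => cc (a i) j := by
          funext j
          rw [hsymm j]
          have h1' : ¬ (finProdFinEquiv (i, j) = finProdFinEquiv (u, u2)) := by
            rw [fpf_eq_iff]; tauto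
          have h2' : ¬ (finProdFinEquiv (i, j) = finProdFinEquiv (u, v2)) := by
            rw [fpf_eq_iff]; tauto
          simp [h1', h2', hi]
        rw [this, hcc]; simp [hi]
    rw [key, ha]

lemma bcomp_sub1_sub1 {n m : ℕ} {f : (Fin n → Bool) → Bool} {gI : (Fin m → Bool) → Bool}
    {s s' : Bool → Bool}
    (hf : Sub1 f s) (hg : Sub1 gI s') (hs : Surj gI) :
    Sub1 (bcomp f gI) (fun x => s (s' x)) := by
  obtain ⟨u, a, ha⟩ := hf
  obtain ⟨u1, a1, ha1⟩ := hg
  choose cc hcc using hs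
  refine ⟨finProdFinEquiv (u, u1),
    fun w => (fun p : Fin n × Fin m =>
      if p.1 = u then a1 p.2 else cc (a p.1) p.2) (finProdFinEquiv.symm w), fun x => ?_⟩
  unfold bcomp
  have key : (fun i => gI fun j =>
      (fun w => if w = finProdFinEquiv (u, u1) then x
        else (fun p : Fin n × Fin m =>
          if p.1 = u then a1 p.2 else cc (a p.1) p.2) (finProdFinEquiv.symm w))
        (finProdFinEquiv (i, j)))
      = fun i => if i = u then s' x else a i := by
    funext i
    have hsymm : ∀ j : Fin m, (finProdFinEquiv.symm (finProdFinEquiv (i, j))) = (i, j) :=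
      fun j => Equiv.symm_apply_apply _ _
    by_cases hi : i = u
    · subst hi
      have : (fun j => if finProdFinEquiv (i, j) = finProdFinEquiv (i, u1) then x
          else (fun p : Fin n × Fin m =>
            if p.1 = i then a1 p.2 else cc (a p.1) p.2)
            (finProdFinEquiv.symm (finProdFinEquiv (i, j))))
          = fun j => if j = u1 then x else a1 j := by
        funext j
        rw [hsymm j]
        by_cases hj : j = u1
        · simp [hj, fpf_eq_iff]
        · have h1' : ¬ (finProdFinEquiv (i, j) = finProdFinEquiv (i, u1)) := by
            rw [fpf_eq_iff]; tauto
          simp [h1', hj]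
      rw [this, ha1]; simp
    · have : (fun j => if finProdFinEquiv (i, j) = finProdFinEquiv (u, u1) then x
          else (fun p : Fin n × Fin m =>
            if p.1 = u then a1 p.2 else cc (a p.1) p.2)
            (finProdFinEquiv.symm (finProdFinEquiv (i, j))))
          = fun j => cc (a i) j := by
        funext j
        rw [hsymm j]
        have h1' : ¬ (finProdFinEquiv (i, j) = finProdFinEquiv (u, u1)) := by
          rw [fpf_eq_iff]; tauto
        simp [h1', hi]
      rw [this, hcc]; simp [hi]
  rw [key, ha]


section RC
variable (h : (Fin t → Bool) → Bool)


variable {t : ℕ} (h : (Fin t → Bool) → Bool)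

lemma sub1_recComp_zero : Sub1 (recComp h 0) (fun x => x) := by
  refine ⟨Fin.cast (pow_zero t).symm 0, fun _ => false, fun x => ?_⟩
  simp [recComp]

lemma surj_recComp_zero : Surj (recComp h 0) := by
  intro c
  exact ⟨fun _ => c, rfl⟩

lemma recComp_succ_eq (d : ℕ) :
    recComp h (d + 1) = fun x : Fin (t ^ (d+1)) → Bool =>
      bcomp h (recComp h d) (fun i => x ((finCongr (pow_succ' t d).symm) i)) := rfl

lemma sub1_recComp_succ {d : ℕ} {s} (hs : Sub1 (bcomp h (recComp h d)) s) :
    Sub1 (recComp h (d + 1)) s := by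
  rw [recComp_succ_eq]
  exact sub1_precomp _ hs

lemma sub2_recComp_succ {d : ℕ} {g} (hs : Sub2 (bcomp h (recComp h d)) g) :
    Sub2 (recComp h (d + 1)) g := by
  rw [recComp_succ_eq]
  exact sub2_precomp _ hs

lemma surj_recComp_succ {d : ℕ} (hs : Surj (bcomp h (recComp h d))) :
    Surj (recComp h (d + 1)) := by
  rw [recComp_succ_eq]
  exact surj_precomp _ hs


end RC



lemma filter_update_false (x : Fin t → Bool) (i : Fin t) :
    (Finset.univ.filter fun j => Function.update x i false j = true) =
      (Finset.univ.filter fun j => x j = true).erase i := by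
  ext j
  by_cases hj : j = i <;> simp [Function.update_apply, hj]

lemma filter_update_true (x : Fin t → Bool) (i : Fin t) :
    (Finset.univ.filter fun j => Function.update x i true j = true) =
      insert i (Finset.univ.filter fun j => x j = true) := by
  ext j
  by_cases hj : j = i <;> simp [Function.update_apply, hj]

lemma eq_zero_of_wt_zero {z : Fin t → Bool} (hz : wt z = 0) : z = fun _ => false := by
  funext i
  by_contra hi
  have hzi : z i = true := by
    cases hq : z i
    · exact absurd hq hi
    · rfl
  have : i ∈ (Finset.univ.filter fun j => z j = true) := by simp [hzi]
  rw [Finset.card_eq_zero.mp hz] at this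
  exact absurd this (Finset.notMem_empty i)

lemma flip1_of_true {z : Fin t → Bool} {i : Fin t} (hzi : z i = true) :
    flip1 z i = Function.update z i false := by
  unfold flip1; rw [hzi]; rfl

lemma flip1_of_false {z : Fin t → Bool} {i : Fin t} (hzi : z i = false) :
    flip1 z i = Function.update z i true := by
  unfold flip1; rw [hzi]; rfl

lemma flip1_flip1 (z : Fin t → Bool) (i : Fin t) : flip1 (flip1 z i) i = z := by
  funext w
  by_cases hw : w = i <;> simp [flip1, Function.update_apply, hw]

lemma flipinv_const (φ : (Fin t → Bool) → Bool)
    (hφ : ∀ z i, φ (flip1 z i) = φ z) : ∀ z z', φ z = φ z' := by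
  suffices hkey : ∀ n (z : Fin t → Bool), wt z = n → φ z = φ (fun _ => false) by
    intro z z'
    rw [hkey _ z rfl, hkey _ z' rfl]
  intro n
  induction n using Nat.strong_induction_on with
  | _ n ih =>
    intro z hz
    rcases Nat.eq_zero_or_pos n with h0 | hpos
    · have hz0 : wt z = 0 := by omega
      rw [eq_zero_of_wt_zero hz0]
    · have hne : (Finset.univ.filter fun j => z j = true).Nonempty := by
        rw [← Finset.card_pos, ← wt, hz]; exact hpos
      obtain ⟨i, hi⟩ := hne
      have hzi : z i = true := by simpa using hi
      have hwt : wt (Function.update z i false) < n := by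
        have h1 : wt (Function.update z i false)
            = (Finset.univ.filter fun j => z j = true).card - 1 := by
          rw [wt, filter_update_false, Finset.card_erase_of_mem hi]
        have h2 : (Finset.univ.filter fun j => z j = true).card = n := hz
        omega
      have hflip : flip1 (Function.update z i false) i = z := by
        funext w
        by_cases hw : w = i <;>
          simp [flip1, Function.update_apply, hw, hzi]
      calc φ z = φ (flip1 (Function.update z i false) i) := by rw [hflip]
        _ = φ (Function.update z i false) := hφ _ i
        _ = φ (fun _ => false) := ih _ hwt _ rfl

lemma parityf_flip (x : Fin t → Bool) (i : Fin t) :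
    PARITYf t (flip1 x i) = !(PARITYf t x) := by
  set c := (Finset.univ.filter fun j => x j = true).card with hc
  cases hxi : x i
  · have h1 : flip1 x i = Function.update x i true := flip1_of_false hxi
    have hnotmem : i ∉ (Finset.univ.filter fun j => x j = true) := by simp [hxi]
    have h2 : (Finset.univ.filter fun j => flip1 x i j = true).card = c + 1 := by
      rw [h1, filter_update_true, Finset.card_insert_of_notMem hnotmem]
    unfold PARITYf
    rw [h2]
    by_cases hp : c % 2 = 1
    · have hq : ¬ ((c + 1) % 2 = 1) := by omega
      simp [hp, hq, ← hc]
    · have hq : (c + 1) % 2 = 1 := by omega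
      simp [hp, hq, ← hc]
  · have h1 : flip1 x i = Function.update x i false := flip1_of_true hxi
    have hmem : i ∈ (Finset.univ.filter fun j => x j = true) := by simp [hxi]
    have hcpos : 1 ≤ c := by
      rw [hc]
      exact Finset.card_pos.mpr ⟨i, hmem⟩
    have h2 : (Finset.univ.filter fun j => flip1 x i j = true).card = c - 1 := by
      rw [h1, filter_update_false, Finset.card_erase_of_mem hmem]
    unfold PARITYf
    rw [h2]
    by_cases hp : c % 2 = 1
    · have hq : ¬ ((c - 1) % 2 = 1) := by omega
      simp [hp, hq, ← hc]
    · have hq : (c - 1) % 2 = 1 := by omega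
      simp [hp, hq, ← hc]

lemma parityf_bot : PARITYf t (fun _ => false) = false := by
  unfold PARITYf
  simp

section StepA

variable (h : (Fin t → Bool) → Bool)

lemma stepA (hdep : ∀ i : Fin t, ∃ x : Fin t → Bool, h x ≠ h (flip1 x i))
    (hpar : h ≠ PARITYf t)
    (hnpar : h ≠ fun x => !(PARITYf t x)) :
    ∃ α β γ : Bool, Sub2 h (fun x y => xor γ ((xor α x) && (xor β y))) := by
  by_contra hcon
  push_neg at hcon
  have claim1 : ∀ (i j : Fin t) (z : Fin t → Bool), i ≠ j →
      (xor (xor (h (fun w => if w = i then false else if w = j then false else z w))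
                (h (fun w => if w = i then false else if w = j then true else z w)))
           (xor (h (fun w => if w = i then true else if w = j then false else z w))
                (h (fun w => if w = i then true else if w = j then true else z w)))) = false := by
    intro i j z hij
    set rr : Bool → Bool → Bool :=
      fun b1 b2 => h (fun w => if w = i then b1 else if w = j then b2 else z w) with hrr
    show (xor (xor (rr false false) (rr false true)) (xor (rr true false) (rr true true))) = false
    by_contra hx4
    have hx4' : (xor (xor (rr false false) (rr false true))
        (xor (rr true false) (rr true true))) = true := by
      cases hq : (xor (xor (rr false false) (rr false true))
        (xor (rr true false) (rr true true)))
      · exact absurd hq hx4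
      · rfl
    have hdec : ∀ q : Bool → Bool → Bool,
        (xor (xor (q false false) (q false true)) (xor (q true false) (q true true))
          = true) → ∃ α β γ : Bool, ∀ x y, q x y = xor γ ((xor α x) && (xor β y)) := by
      decide
    obtain ⟨α, β, γ, hαβγ⟩ := hdec _ hx4'
    exact hcon α β γ ⟨i, j, hij, z, fun x y => hαβγ x y⟩
  -- notation for restriction
  have hflipgen : ∀ z i, h (flip1 z i) = !(h z) := by
    have key1 : ∀ a b : Bool, a ≠ b → xor a b = true := by decide
    have key2 : ∀ a b : Bool, xor a b = true → b = !a := by decide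
    have main : ∀ i z, xor (h z) (h (flip1 z i)) = true := by
      intro i
      have hinv : ∀ (z : Fin t → Bool) (j : Fin t),
          xor (h (flip1 z j)) (h (flip1 (flip1 z j) i)) = xor (h z) (h (flip1 z i)) := by
        intro z j
        by_cases hij : j = i
        · subst hij
          rw [flip1_flip1]
          exact Bool.xor_comm _ _
        · have hij' : i ≠ j := fun hc => hij hc.symm
          have hji : ¬ (j = i) := hij
          have hijn : ¬ (i = j) := hij'
          set rr : Bool → Bool → Bool :=
            fun b1 b2 => h (fun w => if w = i then b1 else if w = j then b2 else z w) with hrr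
          have hid0 : h z = rr (z i) (z j) := by
            apply congrArg h
            funext w
            by_cases hw : w = i
            · subst hw; simp [hijn]
            · by_cases hw2 : w = j <;> simp [hw, hw2, hji]
          have hid1 : h (flip1 z i) = rr (!(z i)) (z j) := by
            apply congrArg h
            funext w
            by_cases hw : w = i
            · subst hw; simp [flip1, Function.update_apply, hijn]
            · by_cases hw2 : w = j
              · subst hw2; simp [flip1, Function.update_apply, hji]
              · simp [flip1, Function.update_apply, hw, hw2]
          have hid2 : h (flip1 z j) = rr (z i) (!(z j)) := by
            apply congrArg h
            funext w
            by_cases hw : w = i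
            · subst hw; simp [flip1, Function.update_apply, hijn]
            · by_cases hw2 : w = j
              · subst hw2; simp [flip1, Function.update_apply, hji]
              · simp [flip1, Function.update_apply, hw, hw2]
          have hid3 : h (flip1 (flip1 z j) i) = rr (!(z i)) (!(z j)) := by
            apply congrArg h
            funext w
            by_cases hw : w = i
            · subst hw
              simp [flip1, Function.update_apply, hijn]
            · by_cases hw2 : w = j
              · subst hw2
                simp [flip1, Function.update_apply, hji, hw]
              · simp [flip1, Function.update_apply, hw, hw2]
          have bool4 : ∀ (q : Bool → Bool → Bool) (a c : Bool),
              (xor (xor (q false false) (q false true)) (xor (q true false) (q true true))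
                = false) → xor (q a (!c)) (q (!a) (!c)) = xor (q a c) (q (!a) c) := by
            decide
          rw [hid0, hid1, hid2, hid3]
          exact bool4 rr (z i) (z j) (claim1 i j z hij')
      obtain ⟨x, hx⟩ := hdep i
      have h1 : xor (h x) (h (flip1 x i)) = true := key1 _ _ hx
      intro z
      have := flipinv_const (fun z => xor (h z) (h (flip1 z i)))
        (fun z' j => hinv z' j) z x
      rw [this, h1]
    intro z i
    exact key2 _ _ (main i z)
  -- h is parity up to complement
  have key4 : ∀ a b : Bool, xor (!a) (!b) = xor a b := by decide
  have hψinv : ∀ (z : Fin t → Bool) (i : Fin t),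
      xor (h (flip1 z i)) (PARITYf t (flip1 z i)) = xor (h z) (PARITYf t z) := by
    intro z i
    rw [hflipgen, parityf_flip]
    exact key4 _ _
  have hψconst := flipinv_const (fun z => xor (h z) (PARITYf t z)) hψinv
  have hmain : ∀ z, h z = xor (h (fun _ => false)) (PARITYf t z) := by
    have key3 : ∀ a b c : Bool, xor a b = xor c false → a = xor c b := by decide
    intro z
    have h0 : xor (h z) (PARITYf t z)
        = xor (h (fun _ => false)) (PARITYf t (fun _ => false)) := hψconst z _
    rw [parityf_bot] at h0
    exact key3 _ _ _ h0
  cases hbot : h (fun _ => false)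
  · apply hpar
    funext z
    rw [hmain z, hbot]
    cases PARITYf t z <;> rfl
  · apply hnpar
    funext z
    rw [hmain z, hbot]
    cases PARITYf t z <;> rfl

end StepA


section MonoAll
variable (h : (Fin t → Bool) → Bool)



section Mono

lemma mono_le (hmono : ∀ (x : Fin t → Bool) (i : Fin t),
    h x = true → h (Function.update x i true) = true) : ∀ (x y : Fin t → Bool), pLe x y → h x = true → h y = true := by
  suffices key : ∀ (s : Finset (Fin t)) (x y : Fin t → Bool), pLe x y →
      (∀ i, i ∉ s → x i = y i) → h x = true → h y = true by
    intro x y hxy hx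
    exact key Finset.univ x y hxy (fun i hi => absurd (Finset.mem_univ i) hi) hx
  intro s
  induction s using Finset.induction_on with
  | empty =>
    intro x y hxy hagree hx
    have : x = y := funext fun i => hagree i (Finset.notMem_empty i)
    rwa [← this]
  | @insert i s' hi ih =>
    intro x y hxy hagree hx
    by_cases hxyi : x i = y i
    · refine ih x y hxy (fun j hj => ?_) hx
      by_cases hji : j = i
      · rw [hji]; exact hxyi
      · exact hagree j (by simp [hji, hj])
    · have hxi : x i = false := by
        cases hq : x i
        · rfl
        · exact absurd (hq.trans (hxy i hq).symm) hxyi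
      have hyi : y i = true := by
        cases hq : y i
        · exact absurd (hxi.trans hq.symm) hxyi
        · rfl
      set y' := Function.update y i false with hy'
      have h1 : h y' = true := by
        refine ih x y' (fun j hj => ?_) (fun j hj => ?_) hx
        · by_cases hji : j = i
          · rw [hji] at hj; rw [hj] at hxi; exact absurd hxi (by simp)
          · simp [hy', Function.update_apply, hji]
            exact hxy j hj
        · by_cases hji : j = i
          · rw [hji, hy']; simp [hxi]
          · simp [hy', Function.update_apply, hji]
            exact hagree j (by simp [hji, hj])
      have h2 : Function.update y' i true = y := by
        funext w
        by_cases hw : w = i <;>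
          simp [hy', Function.update_apply, hw, hyi]
      have := hmono y' i h1
      rwa [h2] at this
end Mono

section Mono2

lemma minT_below (hmono : ∀ (x y : Fin t → Bool), pLe x y → h x = true → h y = true) {m : Fin t → Bool} (hm : MinT h m) :
    ∀ y, pLe y m → y ≠ m → h y = false := by
  intro y hym hne
  obtain ⟨i, hi⟩ := Function.ne_iff.mp hne
  have hyi : y i = false := by
    cases hq : y i
    · rfl
    · exact absurd ((hym i hq) ▸ hq : y i = m i) hi
  have hmi : m i = true := by
    cases hq : m i
    · exact absurd (hyi.trans hq.symm) hi
    · rfl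
  have hsub : pLe y (Function.update m i false) := by
    intro j hj
    by_cases hji : j = i
    · rw [hji] at hj; rw [hj] at hyi; exact absurd hyi (by simp)
    · simp [Function.update_apply, hji]
      exact hym j hj
  cases hq : h y
  · rfl
  · have := hmono y (Function.update m i false) hsub hq
    rw [hm.2 i hmi] at this
    exact absurd this (by simp)

lemma exists_minT (hmono : ∀ (x y : Fin t → Bool), pLe x y → h x = true → h y = true) : ∀ x, h x = true → ∃ m, MinT h m ∧ pLe m x := by
  suffices key : ∀ n x, wt x = n → h x = true → ∃ m, MinT h m ∧ pLe m x by
    intro x hx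
    exact key _ x rfl hx
  intro n
  induction n using Nat.strong_induction_on with
  | _ n ih =>
    intro x hwx hx
    by_cases hM : ∀ i, x i = true → h (Function.update x i false) = false
    · exact ⟨x, ⟨hx, hM⟩, fun i hi => hi⟩
    · push_neg at hM
      obtain ⟨i, hxi, hne⟩ := hM
      have hup : h (Function.update x i false) = true := by
        cases hq : h (Function.update x i false)
        · exact absurd hq hne
        · rfl
      have hmem : i ∈ (Finset.univ.filter fun j => x j = true) := by simp [hxi]
      have hwt : wt (Function.update x i false) < n := by
        have h1 : wt (Function.update x i false)
            = (Finset.univ.filter fun j => x j = true).card - 1 := by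
          rw [wt, filter_update_false, Finset.card_erase_of_mem hmem]
        have h2 : (Finset.univ.filter fun j => x j = true).card = n := hwx
        have h3 : 1 ≤ (Finset.univ.filter fun j => x j = true).card :=
          Finset.card_pos.mpr ⟨i, hmem⟩
        omega
      obtain ⟨m, hm, hle⟩ := ih _ hwt _ rfl hup
      refine ⟨m, hm, fun j hj => ?_⟩
      have := hle j hj
      by_cases hji : j = i
      · rw [hji] at this; simp at this
      · simpa [Function.update_apply, hji] using this

lemma dep_minterm (hmono : ∀ (x y : Fin t → Bool), pLe x y → h x = true → h y = true) (i : Fin t) (hdi : ∃ x, h x ≠ h (flip1 x i)) :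
    ∃ m, MinT h m ∧ m i = true := by
  by_contra hcon
  push_neg at hcon
  have hconst : ∀ x, h x = h (Function.update x i false) := by
    intro x
    have dir1 : h (Function.update x i false) = true → h x = true := by
      intro hup
      refine hmono _ x (fun j hj => ?_) hup
      by_cases hji : j = i
      · rw [hji] at hj; simp at hj
      · simpa [Function.update_apply, hji] using hj
    have dir2 : h x = true → h (Function.update x i false) = true := by
      intro hx
      obtain ⟨m, hm, hle⟩ := exists_minT h hmono x hx
      have hmi : m i = false := by
        cases hq : m i
        · rfl
        · exact absurd hq (by simpa using (hcon m hm))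
      refine hmono m _ (fun j hj => ?_) hm.1
      by_cases hji : j = i
      · rw [hji] at hj; rw [hj] at hmi; exact absurd hmi (by simp)
      · simp [Function.update_apply, hji]
        exact hle j hj
    cases hq : h x
    · cases hq2 : h (Function.update x i false)
      · rfl
      · exact absurd (dir1 hq2) (by simp [hq])
    · exact (dir2 hq).symm
  obtain ⟨x, hx⟩ := hdi
  apply hx
  have e1 : Function.update (flip1 x i) i false = Function.update x i false := by
    funext w
    by_cases hw : w = i <;> simp [flip1, Function.update_apply, hw]
  rw [hconst x, hconst (flip1 x i), e1]

lemma mono_and (hmono : ∀ (x y : Fin t → Bool), pLe x y → h x = true → h y = true) (hdep : ∀ i : Fin t, ∃ x, h x ≠ h (flip1 x i))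
    (ht : 2 ≤ t) (hor : h ≠ ORf t) :
    Sub2 h (fun x y => x && y) := by
  -- there is a minterm of weight ≥ 2
  have hbig : ∃ m, MinT h m ∧ 2 ≤ wt m := by
    by_contra hcon
    push_neg at hcon
    -- no weight-0 minterm
    have hnz : ∀ m, MinT h m → wt m = 1 := by
      intro m hm
      rcases Nat.lt_or_ge (wt m) 2 with hlt | hge
      · interval_cases hwm : wt m
        · exfalso
          have hbot : m = fun _ => false := by
            funext i
            by_contra hi
            have hmi : m i = true := by
              cases hq : m i
              · exact absurd hq hi
              · rfl
            have : i ∈ (Finset.univ.filter fun j => m j = true) := by simp [hmi]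
            rw [Finset.card_eq_zero.mp hwm] at this
            exact absurd this (Finset.notMem_empty i)
          have htriv : ∀ x, h x = true := by
            intro x
            refine hmono m x (fun j hj => ?_) hm.1
            rw [hbot] at hj
            simp at hj
          obtain ⟨x, hx⟩ := hdep ⟨0, by omega⟩
          exact hx ((htriv x).trans (htriv _).symm)
        · rfl
      · exact absurd hge (by simpa using hcon m hm)
    apply hor
    funext x
    by_cases hex : ∃ i, x i = true
    · obtain ⟨i, hxi⟩ := hex
      obtain ⟨m, hm, hmi⟩ := dep_minterm h hmono i (hdep i)
      have hw1 : wt m = 1 := hnz m hm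
      have hsingle : (Finset.univ.filter fun j => m j = true) = {i} := by
        obtain ⟨a, ha⟩ := Finset.card_eq_one.mp hw1
        have : i ∈ (Finset.univ.filter fun j => m j = true) := by simp [hmi]
        rw [ha] at this
        rw [ha, Finset.mem_singleton.mp this]
      have hx : h x = true := by
        refine hmono m x (fun j hj => ?_) hm.1
        have : j ∈ (Finset.univ.filter fun w => m w = true) := by simp [hj]
        rw [hsingle, Finset.mem_singleton] at this
        rw [this]; exact hxi
      rw [hx]
      simp only [ORf]
      exact (decide_eq_true ⟨i, hxi⟩).symm
    · have hfx : h x = false := by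
        cases hq : h x
        · rfl
        · exfalso
          obtain ⟨m, hm, hle⟩ := exists_minT h hmono x hq
          have hw1 : wt m = 1 := hnz m hm
          have : (Finset.univ.filter fun j => m j = true).Nonempty := by
            rw [← Finset.card_pos, ← wt, hw1]; omega
          obtain ⟨i, hi⟩ := this
          have hmi : m i = true := by simpa using hi
          exact hex ⟨i, hle i hmi⟩
      rw [hfx]
      simp [ORf, hex]
  obtain ⟨m, hm, hw2⟩ := hbig
  have hc2 : 1 < (Finset.univ.filter fun j => m j = true).card := hw2
  obtain ⟨i, hi, j, hj, hij⟩ := Finset.one_lt_card.mp hc2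
  have hmi : m i = true := by simpa using hi
  have hmj : m j = true := by simpa using hj
  refine ⟨i, j, hij, fun w => if w = i then false else if w = j then false else m w,
    fun x y => ?_⟩
  have hqdef : ∀ (x y : Bool), (fun w => if w = i then x else if w = j then y else
      (fun w => if w = i then false else if w = j then false else m w) w)
      = fun w => if w = i then x else if w = j then y else m w := by
    intro x y
    funext w
    by_cases hw : w = i
    · simp [hw]
    · by_cases hw2 : w = j <;> simp [hw, hw2]
  rw [hqdef]
  -- now compute
  have htt : h (fun w => if w = i then true else if w = j then true else m w) = true := by
    have : (fun w => if w = i then true else if w = j then true else m w) = m := by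
      funext w
      by_cases hw : w = i
      · simp [hw, hmi.symm]
      · by_cases hw2 : w = j <;> simp [hw, hw2, hmj]
    rw [this]; exact hm.1
  have hfy : ∀ y, h (fun w => if w = i then false else if w = j then y else m w) = false := by
    intro y
    cases hq : h (fun w => if w = i then false else if w = j then y else m w)
    · rfl
    · exfalso
      have hsub : pLe (fun w => if w = i then false else if w = j then y else m w)
          (Function.update m i false) := by
        intro w hw
        by_cases hwi : w = i
        · rw [hwi] at hw; simp at hw
        · simp only [Function.update_apply, hwi, if_false]
          by_cases hwj : w = j
          · rw [hwj]; exact hmj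
          · simp [hwi, hwj] at hw; exact hw
      have := hmono _ _ hsub hq
      rw [hm.2 i hmi] at this
      exact absurd this (by simp)
  have hxf : ∀ x, h (fun w => if w = i then x else if w = j then false else m w) = false := by
    intro x
    cases hq : h (fun w => if w = i then x else if w = j then false else m w)
    · rfl
    · exfalso
      have hsub : pLe (fun w => if w = i then x else if w = j then false else m w)
          (Function.update m j false) := by
        intro w hw
        by_cases hwj : w = j
        · rw [hwj] at hw; simp [hwj] at hw
          exact absurd hw (by simp [Ne.symm hij])
        · simp only [Function.update_apply, hwj, if_false]
          by_cases hwi : w = i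
          · rw [hwi]; exact hmi
          · simp [hwi, hwj] at hw; exact hw
      have := hmono _ _ hsub hq
      rw [hm.2 j hmj] at this
      exact absurd this (by simp)
  cases x
  · rw [hfy y]; rfl
  · cases y
    · rw [hxf true]; rfl
    · rw [htt]; rfl

end Mono2




lemma mono_or (hmono : ∀ (x y : Fin t → Bool), pLe x y → h x = true → h y = true)
    (hdep : ∀ i : Fin t, ∃ x, h x ≠ h (flip1 x i))
    (ht : 2 ≤ t) (hand : h ≠ ANDf t) (hsurj : Surj h) :
    Sub2 h (fun x y => x || y) := by
  classical
  -- two distinct minterms exist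
  have hpair : ∃ m1 m2, MinT h m1 ∧ MinT h m2 ∧ m1 ≠ m2 := by
    have hx : ∃ x, h x ≠ ANDf t x := Function.ne_iff.mp hand
    obtain ⟨x, hx⟩ := hx
    cases hax : ANDf t x
    · -- h x = true, x not all ones
      have hhx : h x = true := by
        cases hq : h x
        · rw [hq, hax] at hx; exact absurd rfl hx
        · rfl
      have : ¬ (∀ i, x i = true) := by
        intro hall
        rw [ANDf] at hax
        simp [hall] at hax
      push_neg at this
      obtain ⟨i0, hi0⟩ := this
      have hxi0 : x i0 = false := by
        cases hq : x i0
        · rfl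
        · exact absurd hq hi0
      obtain ⟨m1, hm1, hle1⟩ := exists_minT h hmono x hhx
      have hm1i0 : m1 i0 = false := by
        cases hq : m1 i0
        · rfl
        · have := hle1 i0 hq
          rw [hxi0] at this
          exact absurd this (by simp)
      obtain ⟨m2, hm2, hm2i0⟩ := dep_minterm h hmono i0 (hdep i0)
      refine ⟨m1, m2, hm1, hm2, fun hc => ?_⟩
      rw [hc] at hm1i0
      rw [hm1i0] at hm2i0
      exact absurd hm2i0 (by simp)
    · -- x all ones but h x = false : impossible by surjectivity + mono
      exfalso
      have hall : ∀ i, x i = true := by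
        rw [ANDf] at hax
        simpa using hax
      have hhx : h x = false := by
        cases hq : h x
        · rfl
        · rw [hq, hax] at hx; exact absurd rfl hx
      obtain ⟨a, ha⟩ := hsurj true
      have := hmono a x (fun i _ => hall i) ha
      rw [hhx] at this
      exact absurd this (by simp)
  -- take a pair of distinct minterms with minimal union size
  set P : ℕ → Prop := fun n => ∃ m1 m2, MinT h m1 ∧ MinT h m2 ∧ m1 ≠ m2 ∧
    (Finset.univ.filter fun w => m1 w = true ∨ m2 w = true).card = n with hP
  have hPex : ∃ n, P n := by
    obtain ⟨m1, m2, hm1, hm2, hne⟩ := hpair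
    exact ⟨_, m1, m2, hm1, hm2, hne, rfl⟩
  obtain ⟨m1, m2, hm1, hm2, hne, hcard⟩ := Nat.find_spec hPex
  have hminimal : ∀ k, k < Nat.find hPex → ¬ P k := fun k hk => Nat.find_min hPex hk
  -- i : in m1 not m2 ; j : in m2 not m1
  have hile : ¬ pLe m1 m2 := by
    intro hle
    have := minT_below h hmono hm2 m1 hle hne
    rw [hm1.1] at this
    exact absurd this (by simp)
  have hjle : ¬ pLe m2 m1 := by
    intro hle
    have := minT_below h hmono hm1 m2 hle (Ne.symm hne)
    rw [hm2.1] at this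
    exact absurd this (by simp)
  rw [pLe] at hile hjle
  push_neg at hile hjle
  obtain ⟨i, hm1i, hm2i'⟩ := hile
  obtain ⟨j, hm2j, hm1j'⟩ := hjle
  have hm2i : m2 i = false := by
    cases hq : m2 i
    · rfl
    · exact absurd hq hm2i'
  have hm1j : m1 j = false := by
    cases hq : m1 j
    · rfl
    · exact absurd hq hm1j'
  have hij : i ≠ j := by
    intro hc
    rw [hc] at hm1i
    rw [hm1i] at hm1j
    exact absurd hm1j (by simp)
  refine ⟨i, j, hij, fun w => if w = i then false else if w = j then false
    else (m1 w || m2 w), fun x y => ?_⟩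
  have hqdef : (fun w => if w = i then x else if w = j then y else
      (fun w => if w = i then false else if w = j then false else (m1 w || m2 w)) w)
      = fun w => if w = i then x else if w = j then y else (m1 w || m2 w) := by
    funext w
    by_cases hw : w = i
    · simp [hw]
    · by_cases hw2 : w = j <;> simp [hw, hw2]
  rw [hqdef]
  have hTy : ∀ y, h (fun w => if w = i then true else if w = j then y else (m1 w || m2 w))
      = true := by
    intro y
    refine hmono m1 _ (fun w hw => ?_) hm1.1
    by_cases hwi : w = i
    · simp [hwi]
    · by_cases hwj : w = j
      · rw [hwj] at hw; rw [hw] at hm1j; exact absurd hm1j (by simp)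
      · simp [hwi, hwj, hw]
  have hxT : ∀ x, h (fun w => if w = i then x else if w = j then true else (m1 w || m2 w))
      = true := by
    intro x
    refine hmono m2 _ (fun w hw => ?_) hm2.1
    by_cases hwi : w = i
    · rw [hwi] at hw; rw [hw] at hm2i; exact absurd hm2i (by simp)
    · by_cases hwj : w = j
      · subst hwj; simp [Ne.symm hij]
      · simp [hwi, hwj, hw]
  have hFF : h (fun w => if w = i then false else if w = j then false else (m1 w || m2 w))
      = false := by
    cases hq : h (fun w => if w = i then false else if w = j then false else (m1 w || m2 w))
    · rfl
    · exfalso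
      obtain ⟨m3, hm3, hle3⟩ := exists_minT h hmono _ hq
      have hm3i : m3 i = false := by
        cases hq2 : m3 i
        · rfl
        · have := hle3 i hq2
          simp at this
      have hm3j : m3 j = false := by
        cases hq2 : m3 j
        · rfl
        · have := hle3 j hq2
          simp [hij, Ne.symm hij] at this
      have hne31 : m3 ≠ m1 := by
        intro hc
        rw [hc] at hm3i
        rw [hm3i] at hm1i
        exact absurd hm1i (by simp)
      -- the union of m3 and m1 is strictly smaller
      have hsubset : (Finset.univ.filter fun w => m3 w = true ∨ m1 w = true) ⊆
          (Finset.univ.filter fun w => m1 w = true ∨ m2 w = true).erase j := by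
        intro w hw
        simp only [Finset.mem_filter, Finset.mem_univ, true_and] at hw
        rw [Finset.mem_erase]
        constructor
        · intro hc
          rw [hc] at hw
          rcases hw with hw | hw
          · rw [hw] at hm3j; exact absurd hm3j (by simp)
          · rw [hw] at hm1j; exact absurd hm1j (by simp)
        · simp only [Finset.mem_filter, Finset.mem_univ, true_and]
          rcases hw with hw | hw
          · have := hle3 w hw
            by_cases hwi : w = i
            · rw [hwi] at hw; rw [hw] at hm3i; exact absurd hm3i (by simp)
            · by_cases hwj : w = j
              · rw [hwj] at hw; rw [hw] at hm3j; exact absurd hm3j (by simp)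
              · simp only [hwi, hwj, if_false] at this
                by_cases hq3 : m1 w = true
                · exact Or.inl hq3
                · by_cases hq4 : m2 w = true
                  · exact Or.inr hq4
                  · exfalso
                    rw [Bool.not_eq_true] at hq3 hq4
                    rw [hq3, hq4] at this
                    simp at this
          · exact Or.inl hw
      have hjmem : j ∈ (Finset.univ.filter fun w => m1 w = true ∨ m2 w = true) :=
        by simp [hm2j]
      have hlt : (Finset.univ.filter fun w => m3 w = true ∨ m1 w = true).card
          < Nat.find hPex := by
        calc (Finset.univ.filter fun w => m3 w = true ∨ m1 w = true).card
            ≤ ((Finset.univ.filter fun w => m1 w = true ∨ m2 w = true).erase j).card :=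
              Finset.card_le_card hsubset
          _ < (Finset.univ.filter fun w => m1 w = true ∨ m2 w = true).card :=
              Finset.card_erase_lt_of_mem hjmem
          _ = Nat.find hPex := hcard
      exact hminimal _ hlt ⟨m3, m1, hm3, hm1, hne31, rfl⟩
  cases x
  · cases y
    · rw [hFF]; rfl
    · rw [hxT false]; rfl
  · rw [hTy y]; rfl


end MonoAll
end Lib
end Stmt10

namespace Stmt10


section Final

variable {t : ℕ} (h : (Fin t → Bool) → Bool)

lemma sub2_fix_left {N : ℕ} {F : (Fin N → Bool) → Bool} {g : Bool → Bool → Bool}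
    (hF : Sub2 F g) (c : Bool) : Sub1 F (fun y => g c y) := by
  obtain ⟨u, v, huv, a, ha⟩ := hF
  refine ⟨v, fun w => if w = u then c else a w, fun y => ?_⟩
  have e : (fun w => if w = v then y else if w = u then c else a w)
      = (fun w => if w = u then c else if w = v then y else a w) := by
    funext w
    by_cases hw : w = u
    · subst hw; simp [huv]
    · by_cases hw2 : w = v <;> simp [hw, hw2, Ne.symm huv]
  rw [e]
  exact ha c y

lemma dep_cases (i : Fin t) {x : Fin t → Bool} (hx : h x ≠ h (flip1 x i)) :
    Sub1 h (fun b => b) ∨ Sub1 h (fun b => !b) := by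
  set s : Bool → Bool := fun b => h (fun w => if w = i then b else x w) with hs
  have e0 : s (x i) = h x := by
    apply congrArg h; funext w; by_cases hw : w = i <;> simp [hw]
  have e1 : s (!(x i)) = h (flip1 x i) := by
    apply congrArg h; funext w
    by_cases hw : w = i <;> simp [flip1, Function.update_apply, hw]
  have hne : s false ≠ s true := by
    intro hc
    apply hx
    cases hxi : x i
    · rw [hxi] at e0 e1
      rw [Bool.not_false] at e1
      rw [← e0, ← e1, hc]
    · rw [hxi] at e0 e1
      rw [Bool.not_true] at e1
      rw [← e0, ← e1, hc]
  cases hsf : s false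
  · cases hst : s true
    · exact absurd (hsf.trans hst.symm) hne
    · left
      refine ⟨i, x, fun b => ?_⟩
      cases b
      · exact hsf
      · exact hst
  · cases hst : s true
    · right
      refine ⟨i, x, fun b => ?_⟩
      cases b
      · show s false = !false
        rw [hsf]; rfl
      · show s true = !true
        rw [hst]; rfl
    · exact absurd (hsf.trans hst.symm) hne

lemma surj_of_dep (i : Fin t) {x : Fin t → Bool} (hx : h x ≠ h (flip1 x i)) : Surj h := by
  intro c
  cases hq : h x
  · cases c
    · exact ⟨x, hq⟩
    · cases hq2 : h (flip1 x i)
      · exact absurd (hq.trans hq2.symm) hx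
      · exact ⟨flip1 x i, hq2⟩
  · cases c
    · cases hq2 : h (flip1 x i)
      · exact ⟨flip1 x i, hq2⟩
      · exact absurd (hq.trans hq2.symm) hx
    · exact ⟨x, hq⟩

lemma step_of_not_hasnot (hnot : ¬ Sub1 h (fun b => !b)) :
    ∀ (x : Fin t → Bool) (i : Fin t), h x = true → h (Function.update x i true) = true := by
  intro x i hx
  by_contra hfail
  have hfalse : h (Function.update x i true) = false := by
    cases hq : h (Function.update x i true)
    · rfl
    · exact absurd hq hfail
  have hxi : x i = false := by
    cases hq : x i
    · rfl
    · exfalso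
      have e : Function.update x i true = x := by
        funext w
        by_cases hw : w = i <;> simp [Function.update_apply, hw, hq]
      rw [e, hx] at hfalse
      exact absurd hfalse (by simp)
  apply hnot
  refine ⟨i, x, fun b => ?_⟩
  cases b
  · show h (fun w => if w = i then false else x w) = !false
    have e : (fun w => if w = i then false else x w) = x := by
      funext w
      by_cases hw : w = i <;> simp [hw, hxi]
    rw [e, hx]; rfl
  · show h (fun w => if w = i then true else x w) = !true
    have e : (fun w => if w = i then true else x w) = Function.update x i true := by
      funext w
      by_cases hw : w = i <;> simp [Function.update_apply, hw]
    rw [e, hfalse]; rfl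

end Final


end Stmt10

open Stmt10

/-- AND₂ (and likewise OR₂) is obtained from h^k (k ≤ 3) by fixing all
but two input coordinates to constants, for any h depending on all its variables that
is none of PARITY, ¬PARITY, AND, OR. -/
theorem stmt_10 (t : ℕ) (ht : 2 ≤ t) (h : (Fin t → Bool) → Bool)
    (hdep : ∀ i : Fin t, ∃ x : Fin t → Bool, h x ≠ h (flip1 x i))
    (hpar : h ≠ PARITYf t)
    (hnpar : h ≠ fun x => !(PARITYf t x))
    (hand : h ≠ ANDf t)
    (hor : h ≠ ORf t) :
    ((∃ k : ℕ, 1 ≤ k ∧ k ≤ 3 ∧ ∃ u v : Fin (t ^ k), u ≠ v ∧ ∃ a : Fin (t ^ k) → Bool,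
        ∀ x y : Bool,
          recComp h k (fun w => if w = u then x else if w = v then y else a w) = (x && y)) ∧
     (∃ k : ℕ, 1 ≤ k ∧ k ≤ 3 ∧ ∃ u v : Fin (t ^ k), u ≠ v ∧ ∃ a : Fin (t ^ k) → Bool,
        ∀ x y : Bool,
          recComp h k (fun w => if w = u then x else if w = v then y else a w) = (x || y))) := by
  classical
  obtain ⟨x0, hx0⟩ := hdep ⟨0, by omega⟩
  have hsurj : Surj h := surj_of_dep h _ hx0
  have hsurj1 : Surj (recComp h 1) :=
    surj_recComp_succ h (bcomp_surj hsurj (surj_recComp_zero h))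
  have hsurj2 : Surj (recComp h 2) :=
    surj_recComp_succ h (bcomp_surj hsurj hsurj1)
  have lift1 : ∀ {s : Bool → Bool}, Sub1 h s → Sub1 (recComp h 1) s := by
    intro s hs
    exact sub1_recComp_succ h (sub1_congr (fun x => rfl)
      (bcomp_sub1_sub1 hs (sub1_recComp_zero h) (surj_recComp_zero h)))
  have lift2 : ∀ {g : Bool → Bool → Bool}, Sub2 h g → Sub2 (recComp h 1) g := by
    intro g hg
    exact sub2_recComp_succ h (sub2_congr (fun x y => rfl)
      (bcomp_sub2 hg (sub1_recComp_zero h) (sub1_recComp_zero h) (surj_recComp_zero h)))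
  have pack : ∀ (k : ℕ), 1 ≤ k → k ≤ 3 → ∀ {g : Bool → Bool → Bool},
      Sub2 (recComp h k) g →
      (∃ k' : ℕ, 1 ≤ k' ∧ k' ≤ 3 ∧ ∃ u v : Fin (t ^ k'), u ≠ v ∧
        ∃ a : Fin (t ^ k') → Bool,
        ∀ x y : Bool,
          recComp h k' (fun w => if w = u then x else if w = v then y else a w) = g x y) := by
    intro k h1 h3 g hs
    obtain ⟨u, v, huv, a, ha⟩ := hs
    exact ⟨k, h1, h3, u, v, huv, a, ha⟩
  obtain ⟨α, β, γ, hg⟩ := stepA h hdep hpar hnpar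
  by_cases hnot : Sub1 h (fun b => !b)
  · by_cases hid : Sub1 h (fun b => b)
    · -- mixed case : k = 3
      have hflipS : ∀ c : Bool, Sub1 h (fun b => xor c b) := by
        intro c
        cases c
        · exact sub1_congr (fun b => by cases b <;> rfl) hid
        · exact sub1_congr (fun b => by cases b <;> rfl) hnot
      have hflip1 : ∀ c : Bool, Sub1 (recComp h 1) (fun b => xor c b) :=
        fun c => lift1 (hflipS c)
      have bkey1 : ∀ (a b c x y : Bool),
          xor c ((xor a (xor a x)) && (xor b (xor b y))) = xor c (x && y) := by decide
      have bkey2 : ∀ (c x y : Bool), xor c (xor c (x && y)) = (x && y) := by decide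
      have bkey3 : ∀ (a b c x y : Bool),
          xor c ((xor a (xor (!a) x)) && (xor b (xor (!b) y)))
            = xor c ((!x) && (!y)) := by decide
      have bkey4 : ∀ (c x y : Bool), xor (!c) (xor c ((!x) && (!y))) = (x || y) := by decide
      have lvl2and : Sub2 (recComp h 2) (fun x y => xor γ (x && y)) :=
        sub2_recComp_succ h (sub2_congr (fun x y => bkey1 α β γ x y)
          (bcomp_sub2 hg (hflip1 α) (hflip1 β) hsurj1))
      have and3 : Sub2 (recComp h 3) (fun x y => x && y) :=
        sub2_recComp_succ h (sub2_congr (fun x y => bkey2 γ x y)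
          (bcomp_sub1_outer (hflipS γ) lvl2and hsurj2))
      have lvl2or : Sub2 (recComp h 2) (fun x y => xor γ ((!x) && (!y))) :=
        sub2_recComp_succ h (sub2_congr (fun x y => bkey3 α β γ x y)
          (bcomp_sub2 hg (hflip1 (!α)) (hflip1 (!β)) hsurj1))
      have or3 : Sub2 (recComp h 3) (fun x y => x || y) :=
        sub2_recComp_succ h (sub2_congr (fun x y => bkey4 γ x y)
          (bcomp_sub1_outer (hflipS (!γ)) lvl2or hsurj2))
      exact ⟨pack 3 (by omega) (by omega) and3, pack 3 (by omega) (by omega) or3⟩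
    · -- antitone case : k = 2
      have bkeyA : ∀ (a b c x : Bool),
          xor c ((xor a x) && (xor b (!b))) = xor (xor c a) x := by decide
      have bkeyB : ∀ (a b c y : Bool),
          xor c ((xor a (!a)) && (xor b y)) = xor (xor c b) y := by decide
      have hfixR : Sub1 h (fun x => xor (xor γ α) x) :=
        sub1_congr (fun x => bkeyA α β γ x) (sub2_fix_right hg (!β))
      have hfixL : Sub1 h (fun y => xor (xor γ β) y) :=
        sub1_congr (fun y => bkeyB α β γ y) (sub2_fix_left hg (!α))
      have hγα : xor γ α = true := by
        cases hq : xor γ α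
        · exfalso
          apply hid
          refine sub1_congr (fun x => ?_) hfixR
          rw [hq]
          cases x <;> rfl
        · rfl
      have hγβ : xor γ β = true := by
        cases hq : xor γ β
        · exfalso
          apply hid
          refine sub1_congr (fun y => ?_) hfixL
          rw [hq]
          cases y <;> rfl
        · rfl
      have keyX : ∀ c a : Bool, xor c a = true → a = !c := by decide
      have hα := keyX γ α hγα
      have hβ := keyX γ β hγβ
      subst hα
      subst hβ
      cases γ
      · -- γ = false : h contains NOR
        have bkeyC : ∀ x y : Bool,
            xor false ((xor (!false) (xor true x)) && (xor (!false) (xor true y)))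
              = (x && y) := by decide
        have and2 : Sub2 (recComp h 2) (fun x y => x && y) :=
          sub2_recComp_succ h (sub2_congr (fun x y => bkeyC x y)
            (bcomp_sub2 hg (lift1 (sub1_congr (fun b => by cases b <;> rfl) hnot))
              (lift1 (sub1_congr (fun b => by cases b <;> rfl) hnot)) hsurj1))
        have bkeyD : ∀ x y : Bool,
            (!(xor false ((xor (!false) x) && (xor (!false) y)))) = (x || y) := by decide
        have or2 : Sub2 (recComp h 2) (fun x y => x || y) :=
          sub2_recComp_succ h (sub2_congr (fun x y => bkeyD x y)
            (bcomp_sub1_outer hnot (lift2 hg) hsurj1))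
        exact ⟨pack 2 (by omega) (by omega) and2, pack 2 (by omega) (by omega) or2⟩
      · -- γ = true : h contains NAND
        have bkeyE : ∀ x y : Bool,
            (!(xor true ((xor (!true) x) && (xor (!true) y)))) = (x && y) := by decide
        have and2 : Sub2 (recComp h 2) (fun x y => x && y) :=
          sub2_recComp_succ h (sub2_congr (fun x y => bkeyE x y)
            (bcomp_sub1_outer hnot (lift2 hg) hsurj1))
        have bkeyF : ∀ x y : Bool,
            xor true ((xor (!true) (xor true x)) && (xor (!true) (xor true y)))
              = (x || y) := by decide
        have or2 : Sub2 (recComp h 2) (fun x y => x || y) :=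
          sub2_recComp_succ h (sub2_congr (fun x y => bkeyF x y)
            (bcomp_sub2 hg (lift1 (sub1_congr (fun b => by cases b <;> rfl) hnot))
              (lift1 (sub1_congr (fun b => by cases b <;> rfl) hnot)) hsurj1))
        exact ⟨pack 2 (by omega) (by omega) and2, pack 2 (by omega) (by omega) or2⟩
  · -- monotone case : k = 1
    have hstep := step_of_not_hasnot h hnot
    have hmono := mono_le h hstep
    have hA : Sub2 h (fun x y => x && y) := mono_and h hmono hdep ht hor
    have hO : Sub2 h (fun x y => x || y) := mono_or h hmono hdep ht hand hsurj
    exact ⟨pack 1 (by omega) (by omega) (lift2 hA), pack 1 (by omega) (by omega) (lift2 hO)⟩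
end

section
/- Let n ≥ 1 and δ ∈ (0, 1/2], and let p be a multilinear real polynomial in n variables with p(x) ∈ [0,1] for all x ∈ {0,1}^n. Then for every x ∈ {0,1}^n and every Δ ∈ ℝ^n with |Δ_i| ≤ δ/n for all i, |p(x + Δ) − p(x)| ≤ 4δ. (This is the statement that every bounded multilinear polynomial is (δ/n, δ)-robust, up to the constant factor 4.) -/
open MvPolynomial Finset

lemma aux_ext {n : ℕ} (p : MvPolynomial (Fin n) ℝ)
    (hml : ∀ s ∈ p.support, ∀ i : Fin n, s i ≤ 1) (y : Fin n → ℝ) :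
    MvPolynomial.eval y p =
      ∑ z : Fin n → Bool, MvPolynomial.eval (embed z) p *
        ∏ i, (if z i then y i else 1 - y i) := by
  rw [MvPolynomial.eval_eq']
  have step : ∀ z : Fin n → Bool, MvPolynomial.eval (embed z) p *
        ∏ i, (if z i then y i else 1 - y i)
      = ∑ d ∈ p.support, MvPolynomial.coeff d p *
          ∏ i, ((embed z i) ^ d i * (if z i then y i else 1 - y i)) := by
    intro z
    rw [MvPolynomial.eval_eq', Finset.sum_mul]
    refine Finset.sum_congr rfl fun d _ => ?_
    rw [mul_assoc, ← Finset.prod_mul_distrib]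
  rw [Finset.sum_congr rfl fun z _ => step z, Finset.sum_comm]
  refine Finset.sum_congr rfl fun d hd => ?_
  rw [← Finset.mul_sum]
  congr 1
  have := (Finset.prod_univ_sum (fun _ : Fin n => (Finset.univ : Finset Bool))
      (fun i b => (boolToReal b) ^ d i * (if b then y i else 1 - y i)))
  rw [Fintype.piFinset_univ] at this
  simp only [embed]
  rw [← this]
  refine Finset.prod_congr rfl fun i _ => ?_
  have hd1 : d i ≤ 1 := hml d hd i
  interval_cases h : d i <;> simp [boolToReal, Fintype.sum_bool]

lemma aux_prod_sub {ι : Type*} [DecidableEq ι] (s : Finset ι) (A B : ι → ℝ)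
    (hA : ∀ i, 0 ≤ A i) (hB : ∀ i, 0 ≤ B i) :
    (∏ i ∈ s, (A i + B i)) - ∏ i ∈ s, A i ≤
      ∑ i ∈ s, B i * ∏ j ∈ s.erase i, (A j + B j) := by
  induction s using Finset.induction with
  | empty => simp
  | @insert a s ha ih =>
    rw [Finset.prod_insert ha, Finset.prod_insert ha, Finset.sum_insert ha,
      Finset.erase_insert ha]
    have hsum : ∀ i ∈ s, B i * ∏ j ∈ (insert a s).erase i, (A j + B j)
        = (A a + B a) * (B i * ∏ j ∈ s.erase i, (A j + B j)) := by
      intro i hi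
      rw [Finset.erase_insert_of_ne (by rintro rfl; exact ha hi),
        Finset.prod_insert (fun h => ha (Finset.mem_of_mem_erase h))]
      ring
    rw [Finset.sum_congr rfl hsum, ← Finset.mul_sum]
    have hS : 0 ≤ ∑ i ∈ s, B i * ∏ j ∈ s.erase i, (A j + B j) := by
      refine Finset.sum_nonneg fun i _ => mul_nonneg (hB i) (Finset.prod_nonneg fun j _ => ?_)
      exact add_nonneg (hA j) (hB j)
    have hP : 0 ≤ ∏ i ∈ s, (A i + B i) :=
      Finset.prod_nonneg fun j _ => add_nonneg (hA j) (hB j)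
    nlinarith [hA a, hB a, ih, mul_le_mul_of_nonneg_left ih (hA a)]

/-- every bounded multilinear polynomial on n variables is
(δ/n, 4δ)-robust to input noise. -/
theorem stmt_13 (n : ℕ) (hn : 1 ≤ n) (δ : ℝ) (hδ : δ ∈ Set.Ioc (0 : ℝ) (1/2))
    (p : MvPolynomial (Fin n) ℝ)
    (hml : ∀ s ∈ p.support, ∀ i : Fin n, s i ≤ 1)
    (hbd : ∀ x : Fin n → Bool, MvPolynomial.eval (embed x) p ∈ Set.Icc (0 : ℝ) 1) :
    ∀ (x : Fin n → Bool) (Δ : Fin n → ℝ), (∀ i, |Δ i| ≤ δ / n) →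
      |MvPolynomial.eval (embed x + Δ) p - MvPolynomial.eval (embed x) p| ≤ 4 * δ := by
  
  intro x Δ hΔ
  obtain ⟨hδ0, hδ2⟩ := hδ
  have hn0 : (0:ℝ) < n := by exact_mod_cast Nat.lt_of_lt_of_le Nat.zero_lt_one hn
  have ht0 : 0 ≤ δ / n := le_of_lt (div_pos hδ0 hn0)
  set y : Fin n → ℝ := embed x + Δ with hy
  set W : (Fin n → Bool) → ℝ := fun z => ∏ i, (if z i then y i else 1 - y i) with hWdef
  have hyt : ∀ i, x i = true → y i = 1 + Δ i := by
    intro i h; simp [hy, embed, boolToReal, h]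
  have hyf : ∀ i, x i = false → y i = Δ i := by
    intro i h; simp [hy, embed, boolToReal, h]
  have hext := aux_ext p hml y
  have hsumW : ∑ z : Fin n → Bool, W z = 1 := by
    have h := (Finset.prod_univ_sum (fun _ : Fin n => (Finset.univ : Finset Bool))
      (fun i b => (if b then y i else 1 - y i)))
    rw [Fintype.piFinset_univ] at h
    calc ∑ z : Fin n → Bool, W z = ∏ i, ∑ b : Bool, (if b then y i else 1 - y i) := h.symm
      _ = 1 := by
          rw [← Finset.prod_const_one (s := (Finset.univ : Finset (Fin n)))]
          refine Finset.prod_congr rfl fun i _ => ?_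
          simp [Fintype.sum_bool]
  have hdiff : MvPolynomial.eval y p - MvPolynomial.eval (embed x) p =
      ∑ z : Fin n → Bool, (MvPolynomial.eval (embed z) p - MvPolynomial.eval (embed x) p) * W z := by
    calc MvPolynomial.eval y p - MvPolynomial.eval (embed x) p
        = (∑ z : Fin n → Bool, MvPolynomial.eval (embed z) p * W z)
            - MvPolynomial.eval (embed x) p * (∑ z : Fin n → Bool, W z) := by
          rw [hext, hsumW, mul_one]
      _ = ∑ z : Fin n → Bool, (MvPolynomial.eval (embed z) p - MvPolynomial.eval (embed x) p) * W z := by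
          rw [Finset.mul_sum, ← Finset.sum_sub_distrib]
          exact Finset.sum_congr rfl fun z _ => by ring
  set A : Fin n → ℝ := fun i => |if x i then y i else 1 - y i| with hAdef
  set B : Fin n → ℝ := fun i => |Δ i| with hBdef
  have hA0 : ∀ i, 0 ≤ A i := fun i => abs_nonneg _
  have hB0 : ∀ i, 0 ≤ B i := fun i => abs_nonneg _
  have hAB : ∀ i, |y i| + |1 - y i| = A i + B i := by
    intro i
    cases hx : x i with
    | false =>
        have h1 : y i = Δ i := hyf i hx
        simp only [hAdef, hBdef, hx, if_false, Bool.false_eq_true]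
        rw [h1]; ring
    | true =>
        have h1 : y i = 1 + Δ i := hyt i hx
        have h2 : (1:ℝ) - y i = -(Δ i) := by rw [h1]; ring
        simp only [hAdef, hBdef, hx, if_true]
        rw [h2, abs_neg]
  have habsW : ∀ z : Fin n → Bool, |W z| = ∏ i, |if z i then y i else 1 - y i| := by
    intro z; exact Finset.abs_prod _ _
  have hsumabs : ∑ z : Fin n → Bool, |W z| = ∏ i, (A i + B i) := by
    have h := (Finset.prod_univ_sum (fun _ : Fin n => (Finset.univ : Finset Bool))
      (fun i b => |if b then y i else 1 - y i|))
    rw [Fintype.piFinset_univ] at h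
    calc ∑ z : Fin n → Bool, |W z|
        = ∑ z : Fin n → Bool, ∏ i, |if z i then y i else 1 - y i| :=
          Finset.sum_congr rfl fun z _ => habsW z
      _ = ∏ i, ∑ b : Bool, |if b then y i else 1 - y i| := h.symm
      _ = ∏ i, (A i + B i) := by
          refine Finset.prod_congr rfl fun i _ => ?_
          rw [Fintype.sum_bool, if_pos rfl, if_neg (by simp)]
          exact hAB i
  have hWx : |W x| = ∏ i, A i := habsW x
  have hABle : ∀ j, A j + B j ≤ 1 + 2 * (δ / n) := by
    intro j
    have hBj : B j ≤ δ / n := hΔ j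
    have hAj : A j ≤ 1 + δ / n := by
      cases hx : x j with
      | false =>
          have h1 : y j = Δ j := hyf j hx
          simp only [hAdef, hx, if_false, Bool.false_eq_true]
          rw [h1]
          calc |1 - Δ j| ≤ |(1:ℝ)| + |Δ j| := abs_sub _ _
            _ ≤ 1 + δ / n := by rw [abs_one]; linarith [hΔ j]
      | true =>
          have h1 : y j = 1 + Δ j := hyt j hx
          simp only [hAdef, hx, if_true]
          rw [h1]
          calc |1 + Δ j| ≤ |(1:ℝ)| + |Δ j| := abs_add_le _ _
            _ ≤ 1 + δ / n := by rw [abs_one]; linarith [hΔ j]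
    linarith
  have h1le : (1:ℝ) ≤ 1 + 2 * (δ / n) := by linarith
  have hEbound : (1 + 2 * (δ / n)) ^ n ≤ Real.exp 1 := by
    calc (1 + 2 * (δ / n)) ^ n ≤ (Real.exp (2 * (δ / n))) ^ n := by
          refine pow_le_pow_left₀ (by linarith) ?_ n
          have := Real.add_one_le_exp (2 * (δ / n))
          linarith
      _ = Real.exp (n * (2 * (δ / n))) := (Real.exp_nat_mul _ n).symm
      _ ≤ Real.exp 1 := by
          refine Real.exp_le_exp.mpr ?_
          have hne : (n:ℝ) ≠ 0 := ne_of_gt hn0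
          rw [show (n:ℝ) * (2 * (δ / n)) = 2 * δ by field_simp]
          linarith
  have hterm : ∀ i : Fin n, B i * ∏ j ∈ Finset.univ.erase i, (A j + B j)
      ≤ (δ / n) * (1 + 2 * (δ / n)) ^ n := by
    intro i
    have hprod : ∏ j ∈ Finset.univ.erase i, (A j + B j) ≤ (1 + 2 * (δ / n)) ^ n := by
      calc ∏ j ∈ Finset.univ.erase i, (A j + B j)
          ≤ ∏ j ∈ Finset.univ.erase i, (1 + 2 * (δ / n)) := by
            refine Finset.prod_le_prod (fun j _ => add_nonneg (hA0 j) (hB0 j))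
              (fun j _ => hABle j)
        _ = (1 + 2 * (δ / n)) ^ (Finset.univ.erase i).card := by rw [Finset.prod_const]
        _ ≤ (1 + 2 * (δ / n)) ^ n := by
            refine pow_le_pow_right₀ h1le ?_
            calc (Finset.univ.erase i).card ≤ (Finset.univ : Finset (Fin n)).card :=
                  Finset.card_le_card (Finset.erase_subset _ _)
              _ = n := by simp
    have hp0 : 0 ≤ ∏ j ∈ Finset.univ.erase i, (A j + B j) :=
      Finset.prod_nonneg fun j _ => add_nonneg (hA0 j) (hB0 j)
    exact mul_le_mul (hΔ i) hprod hp0 ht0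
  have hmain : |MvPolynomial.eval y p - MvPolynomial.eval (embed x) p|
      ≤ (∑ z : Fin n → Bool, |W z|) - |W x| := by
    rw [hdiff]
    have step1 : |∑ z : Fin n → Bool,
        (MvPolynomial.eval (embed z) p - MvPolynomial.eval (embed x) p) * W z|
        ≤ ∑ z : Fin n → Bool, (if z = x then 0 else |W z|) := by
      refine (Finset.abs_sum_le_sum_abs _ _).trans (Finset.sum_le_sum fun z _ => ?_)
      by_cases hzx : z = x
      · simp [hzx]
      · rw [if_neg hzx, abs_mul]
        have hb1 := hbd z
        have hb2 := hbd x
        have habs1 : |MvPolynomial.eval (embed z) p - MvPolynomial.eval (embed x) p| ≤ 1 := by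
          rw [abs_le]; constructor
          · linarith [hb1.1, hb2.2]
          · linarith [hb1.2, hb2.1]
        calc |MvPolynomial.eval (embed z) p - MvPolynomial.eval (embed x) p| * |W z|
            ≤ 1 * |W z| := mul_le_mul_of_nonneg_right habs1 (abs_nonneg _)
          _ = |W z| := one_mul _
    have step2 : (∑ z : Fin n → Bool, (if z = x then 0 else |W z|))
        = (∑ z : Fin n → Bool, |W z|) - |W x| := by
      have hz : ∀ z : Fin n → Bool, (if z = x then (0:ℝ) else |W z|)
          = |W z| - (if z = x then |W x| else 0) := by
        intro z; by_cases h : z = x <;> simp [h]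
      rw [Finset.sum_congr rfl fun z _ => hz z, Finset.sum_sub_distrib,
        Finset.sum_ite_eq' Finset.univ x (fun _ => |W x|), if_pos (Finset.mem_univ x)]
    linarith [step1, step2.le, step2.ge]
  calc |MvPolynomial.eval (embed x + Δ) p - MvPolynomial.eval (embed x) p|
      ≤ (∑ z : Fin n → Bool, |W z|) - |W x| := hmain
    _ = (∏ i, (A i + B i)) - ∏ i, A i := by rw [hsumabs, hWx]
    _ ≤ ∑ i : Fin n, B i * ∏ j ∈ Finset.univ.erase i, (A j + B j) :=
        aux_prod_sub Finset.univ A B hA0 hB0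
    _ ≤ ∑ _i : Fin n, (δ / n) * (1 + 2 * (δ / n)) ^ n :=
        Finset.sum_le_sum fun i _ => hterm i
    _ = n * ((δ / n) * (1 + 2 * (δ / n)) ^ n) := by
        rw [Finset.sum_const, Finset.card_univ, Fintype.card_fin]; simp [nsmul_eq_mul]
    _ = δ * (1 + 2 * (δ / n)) ^ n := by
        have hne : (n:ℝ) ≠ 0 := ne_of_gt hn0
        field_simp
    _ ≤ δ * Real.exp 1 := by
        refine mul_le_mul_of_nonneg_left hEbound (le_of_lt hδ0)
    _ ≤ 4 * δ := by
        have := Real.exp_one_lt_d9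
        nlinarith
end

section
/- For every d ≥ 1, the spectral sensitivity of the recursive majority function MAJ_3^d : {0,1}^{3^d} → {0,1} equals 2^d; that is, the operator (spectral) norm of the adjacency matrix of the sensitivity graph of MAJ_3^d is exactly 2^d. -/
open MvPolynomial Finset

/-- Adjacency matrix of the sensitivity graph of f. -/
def sensAdj {n : ℕ} (f : (Fin n → Bool) → Bool) :
    Matrix (Fin n → Bool) (Fin n → Bool) ℝ :=
  fun x y => if (∃ i : Fin n, y = flip1 x i) ∧ f x ≠ f y then 1 else 0

/-- Spectral (ℓ₂ operator) norm of a real square matrix. -/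
noncomputable def specNorm {α : Type*} [Fintype α] [DecidableEq α] (A : Matrix α α ℝ) : ℝ :=
  ‖Matrix.toEuclideanCLM (𝕜 := ℝ) A‖


open scoped RealInnerProductSpace

namespace Stmt16


abbrev XX (d : ℕ) := Fin (3 ^ d) → Bool

def F (d : ℕ) : XX d → Bool := recComp (MAJ 3) d

def emb (d : ℕ) (i : Fin 3) (j : Fin (3 ^ d)) : Fin (3 ^ (d + 1)) :=
  Fin.cast (pow_succ' 3 d).symm (finProdFinEquiv (i, j))

def blk (d : ℕ) (x : XX (d + 1)) (i : Fin 3) : XX d := fun j => x (emb d i j)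

def G (d : ℕ) (x : XX (d + 1)) : Fin 3 → Bool := fun i => F d (blk d x i)

lemma F_succ (d : ℕ) (x : XX (d + 1)) : F (d + 1) x = MAJ 3 (G d x) := rfl

lemma emb_inj {d : ℕ} {i i' : Fin 3} {j j' : Fin (3 ^ d)}
    (h : emb d i j = emb d i' j') : i = i' ∧ j = j' := by
  have hv := congrArg Fin.val h
  have hv' : (finProdFinEquiv (i, j) : Fin (3 * 3 ^ d)) = finProdFinEquiv (i', j') :=
    Fin.ext hv
  have h2 := finProdFinEquiv.injective hv' 
  exact ⟨congrArg Prod.fst h2, congrArg Prod.snd h2⟩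

lemma emb_surj (d : ℕ) (c : Fin (3 ^ (d + 1))) : ∃ i j, c = emb d i j := by
  refine ⟨(finProdFinEquiv.symm (Fin.cast (pow_succ' 3 d) c)).1,
    (finProdFinEquiv.symm (Fin.cast (pow_succ' 3 d) c)).2, ?_⟩
  apply Fin.ext
  show c.val = (finProdFinEquiv ((finProdFinEquiv.symm (Fin.cast (pow_succ' 3 d) c)))).val
  rw [Equiv.apply_symm_apply]
  rfl

lemma flip1_apply {t : ℕ} (x : Fin t → Bool) (i k : Fin t) :
    flip1 x i k = if k = i then !(x i) else x k :=
  Function.update_apply x i (!(x i)) k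

lemma flip1_flip1 {t : ℕ} (x : Fin t → Bool) (i : Fin t) : flip1 (flip1 x i) i = x := by
  funext k
  rcases eq_or_ne k i with h | h
  · subst h
    simp [flip1_apply]
  · simp [flip1_apply, h]

lemma flip1_inj {t : ℕ} (x : Fin t → Bool) {i i' : Fin t}
    (h : flip1 x i = flip1 x i') : i = i' := by
  by_contra hne
  have h1 := congrFun h i
  rw [flip1_apply, flip1_apply, if_pos rfl, if_neg hne] at h1
  exact (Bool.not_ne_self (x i)) h1

lemma blk_flip_same (d : ℕ) (x : XX (d + 1)) (i : Fin 3) (j : Fin (3 ^ d)) :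
    blk d (flip1 x (emb d i j)) i = flip1 (blk d x i) j := by
  funext j'
  show flip1 x (emb d i j) (emb d i j') = flip1 (blk d x i) j j'
  rw [flip1_apply, flip1_apply]
  rcases eq_or_ne j' j with h | h
  · subst h; rw [if_pos rfl, if_pos rfl]; rfl
  · rw [if_neg h, if_neg (fun hc => h (emb_inj hc).2)]; rfl

lemma blk_flip_ne (d : ℕ) (x : XX (d + 1)) {i i' : Fin 3} (j : Fin (3 ^ d))
    (h : i' ≠ i) : blk d (flip1 x (emb d i j)) i' = blk d x i' := by
  funext j'
  show flip1 x (emb d i j) (emb d i' j') = blk d x i' j'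
  rw [flip1_apply, if_neg (fun hc => h (emb_inj hc).1)]
  rfl

lemma G_flip (d : ℕ) (x : XX (d + 1)) (i : Fin 3) (j : Fin (3 ^ d)) :
    G d (flip1 x (emb d i j)) = Function.update (G d x) i (F d (flip1 (blk d x i) j)) := by
  funext i'
  rcases eq_or_ne i' i with h | h
  · rw [h, Function.update_self]
    show F d (blk d (flip1 x (emb d i j)) i) = _
    rw [blk_flip_same]
  · rw [Function.update_of_ne h]
    show F d (blk d (flip1 x (emb d i j)) i') = F d (blk d x i')
    rw [blk_flip_ne d x j h]

lemma sens_succ (d : ℕ) (x : XX (d + 1)) (i : Fin 3) (j : Fin (3 ^ d)) :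
    (F (d + 1) (flip1 x (emb d i j)) ≠ F (d + 1) x) ↔
      ((F d (flip1 (blk d x i) j) ≠ F d (blk d x i)) ∧
        (MAJ 3 (flip1 (G d x) i) ≠ MAJ 3 (G d x))) := by
  rw [F_succ, F_succ, G_flip]
  rcases eq_or_ne (F d (flip1 (blk d x i) j)) (F d (blk d x i)) with hb | hb
  · rw [hb]
    have h1 : Function.update (G d x) i (F d (blk d x i)) = G d x := Function.update_eq_self i _
    rw [h1]
    simp [hb]
  · have hbn : F d (flip1 (blk d x i) j) = !(F d (blk d x i)) := by
      cases hF : F d (blk d x i) <;> cases hF' : F d (flip1 (blk d x i) j) <;> simp_all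
    have h1 : Function.update (G d x) i (F d (flip1 (blk d x i) j)) = flip1 (G d x) i := by
      rw [hbn]; rfl
    rw [h1]
    simp [hb]

def scnt {n : ℕ} (f : (Fin n → Bool) → Bool) (x : Fin n → Bool) : ℕ :=
  (Finset.univ.filter fun i => f (flip1 x i) ≠ f x).card

def eqv (d : ℕ) : Fin 3 × Fin (3 ^ d) ≃ Fin (3 ^ (d + 1)) :=
  finProdFinEquiv.trans (finCongr (pow_succ' 3 d).symm)

lemma eqv_apply (d : ℕ) (i : Fin 3) (j : Fin (3 ^ d)) : eqv d (i, j) = emb d i j := rfl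

lemma scnt_succ (d : ℕ) (x : XX (d + 1)) :
    scnt (F (d + 1)) x =
      ∑ i : Fin 3, if MAJ 3 (flip1 (G d x) i) ≠ MAJ 3 (G d x)
        then scnt (F d) (blk d x i) else 0 := by
  unfold scnt
  rw [Finset.card_filter]
  rw [← Equiv.sum_comp (eqv d)
    (fun c => if F (d + 1) (flip1 x c) ≠ F (d + 1) x then 1 else 0)]
  rw [Fintype.sum_prod_type]
  apply Finset.sum_congr rfl
  intro i _
  rcases Classical.em (MAJ 3 (flip1 (G d x) i) ≠ MAJ 3 (G d x)) with hB | hB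
  · rw [if_pos hB, Finset.card_filter]
    apply Finset.sum_congr rfl
    intro j _
    rw [eqv_apply]
    rcases Classical.em (F d (flip1 (blk d x i) j) ≠ F d (blk d x i)) with hA | hA
    · rw [if_pos ((sens_succ d x i j).2 ⟨hA, hB⟩), if_pos hA]
    · rw [if_neg (fun hc => hA ((sens_succ d x i j).1 hc).1), if_neg hA]
  · rw [if_neg hB]
    apply Finset.sum_eq_zero
    intro j _
    rw [eqv_apply, if_neg (fun hc => hB ((sens_succ d x i j).1 hc).2)]

def NC (z : Fin 3 → Bool) : Prop := ∃ a b : Fin 3, z a ≠ z b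

instance (z : Fin 3 → Bool) : Decidable (NC z) := by unfold NC; infer_instance

lemma maj_card_le (z : Fin 3 → Bool) :
    (Finset.univ.filter fun i => MAJ 3 (flip1 z i) ≠ MAJ 3 z).card ≤ 2 := by
  revert z; decide

lemma maj_card_eq (z : Fin 3 → Bool) (h : NC z) :
    (Finset.univ.filter fun i => MAJ 3 (flip1 z i) ≠ MAJ 3 z).card = 2 := by
  revert z; decide

lemma maj_flip_NC (z : Fin 3 → Bool) (i : Fin 3)
    (h : MAJ 3 (flip1 z i) ≠ MAJ 3 z) : NC (flip1 z i) := by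
  revert h; revert z i; decide

def good : (d : ℕ) → XX d → Prop
  | 0 => fun _ => True
  | d + 1 => fun x => NC (G d x) ∧ ∀ i, good d (blk d x i)

lemma fin_pow_zero_eq (i i' : Fin (3 ^ 0)) : i = i' := by
  apply Fin.ext
  have h1 := i.isLt
  have h2 := i'.isLt
  norm_num at h1 h2
  omega

lemma scnt_zero (x : XX 0) : scnt (F 0) x = 1 := by
  unfold scnt
  have hall : ∀ i : Fin (3 ^ 0), F 0 (flip1 x i) ≠ F 0 x := by
    intro i
    have hi : Fin.cast (pow_zero 3).symm 0 = i := fin_pow_zero_eq _ _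
    show flip1 x i (Fin.cast (pow_zero 3).symm 0) ≠ x (Fin.cast (pow_zero 3).symm 0)
    rw [hi, flip1_apply, if_pos rfl]
    exact Bool.not_ne_self _
  rw [Finset.filter_true_of_mem (fun i _ => hall i), Finset.card_univ]
  rw [Fintype.card_fin, pow_zero]

lemma scnt_le (d : ℕ) : ∀ x : XX d, scnt (F d) x ≤ 2 ^ d := by
  induction d with
  | zero => intro x; rw [scnt_zero, pow_zero]
  | succ d ih =>
    intro x
    rw [scnt_succ]
    calc ∑ i : Fin 3, (if MAJ 3 (flip1 (G d x) i) ≠ MAJ 3 (G d x)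
            then scnt (F d) (blk d x i) else 0)
        ≤ ∑ i : Fin 3, (if MAJ 3 (flip1 (G d x) i) ≠ MAJ 3 (G d x) then 2 ^ d else 0) := by
          apply Finset.sum_le_sum
          intro i _
          split
          · exact ih _
          · exact le_refl 0
      _ = (Finset.univ.filter fun i => MAJ 3 (flip1 (G d x) i) ≠ MAJ 3 (G d x)).card * 2 ^ d := by
          rw [← Finset.sum_filter, Finset.sum_const, smul_eq_mul]
      _ ≤ 2 * 2 ^ d := Nat.mul_le_mul_right _ (maj_card_le _)
      _ = 2 ^ (d + 1) := (pow_succ' 2 d).symm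

lemma good_scnt (d : ℕ) : ∀ x : XX d, good d x → scnt (F d) x = 2 ^ d := by
  induction d with
  | zero => intro x _; rw [scnt_zero, pow_zero]
  | succ d ih =>
    intro x hg
    rw [scnt_succ]
    have h1 : ∀ i : Fin 3, (if MAJ 3 (flip1 (G d x) i) ≠ MAJ 3 (G d x)
        then scnt (F d) (blk d x i) else 0)
        = (if MAJ 3 (flip1 (G d x) i) ≠ MAJ 3 (G d x) then 2 ^ d else 0) := by
      intro i
      split
      · exact ih _ (hg.2 i)
      · rfl
    rw [Finset.sum_congr rfl (fun i _ => h1 i), ← Finset.sum_filter, Finset.sum_const,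
      smul_eq_mul, maj_card_eq _ hg.1]
    exact (pow_succ' 2 d).symm

lemma good_closed : ∀ (d : ℕ) (x : XX d) (c : Fin (3 ^ d)), good d x →
    F d (flip1 x c) ≠ F d x → good d (flip1 x c) := by
  intro d
  induction d with
  | zero => intro x c _ _; trivial
  | succ d ih =>
    intro x c hg hs
    obtain ⟨i, j, rfl⟩ := emb_surj d c
    obtain ⟨hA, hB⟩ := (sens_succ d x i j).1 hs
    constructor
    · have hbn : F d (flip1 (blk d x i) j) = !(F d (blk d x i)) := by
        cases hF : F d (blk d x i) <;> cases hF' : F d (flip1 (blk d x i) j) <;> simp_all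
      have hGf : G d (flip1 x (emb d i j)) = flip1 (G d x) i := by
        rw [G_flip, hbn]; rfl
      rw [hGf]
      exact maj_flip_NC _ _ hB
    · intro i'
      rcases eq_or_ne i' i with h | h
      · subst h
        rw [blk_flip_same]
        exact ih (blk d x i') j (hg.2 i') hA
      · rw [blk_flip_ne d x j h]
        exact hg.2 i'

def glue (d : ℕ) (u : Fin 3 → XX d) : XX (d + 1) :=
  fun c => u (finProdFinEquiv.symm (Fin.cast (pow_succ' 3 d) c)).1
    (finProdFinEquiv.symm (Fin.cast (pow_succ' 3 d) c)).2

lemma blk_glue (d : ℕ) (u : Fin 3 → XX d) (i : Fin 3) : blk d (glue d u) i = u i := by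
  funext j
  show glue d u (emb d i j) = u i j
  unfold glue
  have h1 : Fin.cast (pow_succ' 3 d) (emb d i j) = finProdFinEquiv (i, j) := Fin.ext rfl
  rw [h1, Equiv.symm_apply_apply]

lemma good_ex : ∀ (d : ℕ) (b : Bool), ∃ x : XX d, good d x ∧ F d x = b := by
  intro d
  induction d with
  | zero =>
    intro b
    exact ⟨fun _ => b, trivial, rfl⟩
  | succ d ih =>
    intro b
    obtain ⟨x0, hg0, hv0⟩ := ih b
    obtain ⟨x1, hg1, hv1⟩ := ih true
    obtain ⟨x2, hg2, hv2⟩ := ih false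
    have hG : G d (glue d ![x0, x1, x2]) = ![b, true, false] := by
      funext i
      show F d (blk d (glue d ![x0, x1, x2]) i) = _
      rw [blk_glue]
      fin_cases i
      · exact hv0
      · exact hv1
      · exact hv2
    refine ⟨glue d ![x0, x1, x2], ⟨?_, ?_⟩, ?_⟩
    · rw [hG]
      exact ⟨1, 2, by simp⟩
    · intro i
      rw [blk_glue]
      fin_cases i
      · exact hg0
      · exact hg1
      · exact hg2
    · rw [F_succ, hG]
      cases b <;> decide



lemma clm_apply {α : Type*} [Fintype α] [DecidableEq α] (A : Matrix α α ℝ)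
    (v : EuclideanSpace ℝ α) (x : α) :
    (Matrix.toEuclideanCLM (𝕜 := ℝ) A) v x = ∑ y, A x y * v y := by
  have h := Matrix.ofLp_toEuclideanCLM (𝕜 := ℝ) A v
  have h2 := congrFun h x
  have h3 : (Matrix.toEuclideanCLM (𝕜 := ℝ) A) v x
      = Matrix.toLin' A (WithLp.equiv _ _ v) x := h2
  rw [h3, Matrix.toLin'_apply, Matrix.mulVec, dotProduct]
  rfl

lemma specNorm_le_of {α : Type*} [Fintype α] [DecidableEq α] (A : Matrix α α ℝ) (r : ℝ)
    (hr : 0 ≤ r) (h01 : ∀ x y, A x y = 0 ∨ A x y = 1)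
    (hrow : ∀ x, ∑ y, A x y ≤ r) (hcol : ∀ y, ∑ x, A x y ≤ r) :
    specNorm A ≤ r := by
  unfold specNorm
  refine ContinuousLinearMap.opNorm_le_bound _ hr ?_
  intro v
  have hnn : ∀ x y, 0 ≤ A x y := by
    intro x y; rcases h01 x y with h | h <;> rw [h] <;> norm_num
  have hidem : ∀ x y, A x y ^ 2 = A x y := by
    intro x y; rcases h01 x y with h | h <;> rw [h] <;> norm_num
  have key : ∑ x, (∑ y, A x y * v y) ^ 2 ≤ r ^ 2 * ∑ y, (v y : ℝ) ^ 2 := by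
    have step1 : ∀ x, (∑ y, A x y * v y) ^ 2 ≤ r * ∑ y, A x y * (v y) ^ 2 := by
      intro x
      have hcs := Finset.sum_mul_sq_le_sq_mul_sq Finset.univ
        (fun y => A x y) (fun y => A x y * v y)
      have he1 : ∑ y, A x y * (A x y * v y) = ∑ y, A x y * v y := by
        apply Finset.sum_congr rfl
        intro y _
        rw [← mul_assoc, ← sq, hidem]
      have he2 : ∑ y, (A x y * v y) ^ 2 = ∑ y, A x y * (v y) ^ 2 := by
        apply Finset.sum_congr rfl
        intro y _
        rw [mul_pow, hidem]
      have he3 : ∑ y, (A x y) ^ 2 = ∑ y, A x y :=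
        Finset.sum_congr rfl fun y _ => hidem x y
      rw [he1, he2, he3] at hcs
      refine le_trans hcs (mul_le_mul_of_nonneg_right (hrow x) ?_)
      exact Finset.sum_nonneg fun y _ => mul_nonneg (hnn x y) (sq_nonneg _)
    calc ∑ x, (∑ y, A x y * v y) ^ 2
        ≤ ∑ x : α, r * ∑ y, A x y * (v y) ^ 2 :=
          Finset.sum_le_sum fun x _ => step1 x
      _ = r * ∑ y, (∑ x, A x y) * (v y) ^ 2 := by
          rw [← Finset.mul_sum, Finset.sum_comm]
          congr 1
          apply Finset.sum_congr rfl
          intro y _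
          rw [Finset.sum_mul]
      _ ≤ r * ∑ y, r * (v y) ^ 2 := by
          apply mul_le_mul_of_nonneg_left _ hr
          apply Finset.sum_le_sum
          intro y _
          exact mul_le_mul_of_nonneg_right (hcol y) (sq_nonneg _)
      _ = r ^ 2 * ∑ y, (v y) ^ 2 := by rw [← Finset.mul_sum, ← mul_assoc, sq]
  rw [EuclideanSpace.norm_eq, EuclideanSpace.norm_eq]
  have hs : ∀ w : EuclideanSpace ℝ α, ∑ y, ‖w y‖ ^ 2 = ∑ y, (w y) ^ 2 := by
    intro w
    exact Finset.sum_congr rfl fun y _ => by rw [Real.norm_eq_abs, sq_abs]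
  rw [hs, hs]
  have h1 : ∑ x, ((Matrix.toEuclideanCLM (𝕜 := ℝ) A) v x) ^ 2
      = ∑ x, (∑ y, A x y * v y) ^ 2 :=
    Finset.sum_congr rfl fun x _ => by rw [clm_apply]
  rw [h1]
  calc Real.sqrt (∑ x, (∑ y, A x y * v y) ^ 2)
      ≤ Real.sqrt (r ^ 2 * ∑ y, (v y) ^ 2) := Real.sqrt_le_sqrt key
    _ = r * Real.sqrt (∑ y, (v y) ^ 2) := by
        rw [Real.sqrt_mul (sq_nonneg r), Real.sqrt_sq hr]

lemma specNorm_ge {α : Type*} [Fintype α] [DecidableEq α] (A : Matrix α α ℝ)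
    (v : EuclideanSpace ℝ α) (r : ℝ) (hv : v ≠ 0)
    (h : r * ‖v‖ ^ 2 ≤ ⟪v, (Matrix.toEuclideanCLM (𝕜 := ℝ) A) v⟫) :
    r ≤ specNorm A := by
  set T := Matrix.toEuclideanCLM (𝕜 := ℝ) A with hT
  have h1 : ⟪v, T v⟫ ≤ ‖T‖ * ‖v‖ ^ 2 := by
    calc ⟪v, T v⟫ ≤ ‖v‖ * ‖T v‖ := real_inner_le_norm v (T v)
      _ ≤ ‖v‖ * (‖T‖ * ‖v‖) :=
          mul_le_mul_of_nonneg_left (T.le_opNorm v) (norm_nonneg v)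
      _ = ‖T‖ * ‖v‖ ^ 2 := by ring
  have hv2 : 0 < ‖v‖ ^ 2 := by
    have : 0 < ‖v‖ := norm_pos_iff.2 hv
    positivity
  have := le_trans h h1
  unfold specNorm
  nlinarith


lemma sensAdj_symm {n : ℕ} (f : (Fin n → Bool) → Bool) (x y : Fin n → Bool) :
    sensAdj f x y = sensAdj f y x := by
  unfold sensAdj
  apply if_congr _ rfl rfl
  constructor
  · rintro ⟨⟨i, rfl⟩, hne⟩
    exact ⟨⟨i, (flip1_flip1 x i).symm⟩, Ne.symm hne⟩
  · rintro ⟨⟨i, rfl⟩, hne⟩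
    exact ⟨⟨i, (flip1_flip1 y i).symm⟩, Ne.symm hne⟩

lemma sensAdj_01 {n : ℕ} (f : (Fin n → Bool) → Bool) (x y : Fin n → Bool) :
    sensAdj f x y = 0 ∨ sensAdj f x y = 1 := by
  unfold sensAdj
  split
  · right; rfl
  · left; rfl

lemma rowsum {n : ℕ} (f : (Fin n → Bool) → Bool) (x : Fin n → Bool) :
    ∑ y, sensAdj f x y = (scnt f x : ℝ) := by
  unfold sensAdj
  rw [Finset.sum_boole]
  congr 1
  unfold scnt
  symm
  apply Finset.card_bij (fun i _ => flip1 x i)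
  · intro i hi
    rw [Finset.mem_filter] at hi ⊢
    exact ⟨Finset.mem_univ _, ⟨i, rfl⟩, Ne.symm hi.2⟩
  · intro i1 h1 i2 h2 he
    exact flip1_inj x he
  · intro y hy
    rw [Finset.mem_filter] at hy
    obtain ⟨-, ⟨i, rfl⟩, hne⟩ := hy
    exact ⟨i, Finset.mem_filter.2 ⟨Finset.mem_univ _, Ne.symm hne⟩, rfl⟩

end Stmt16

/-- the spectral sensitivity of recursive majority MAJ₃^d equals 2^d. -/
theorem stmt_16 : ∀ d : ℕ, 1 ≤ d →
    specNorm (sensAdj (recComp (MAJ 3) d)) = 2 ^ d := by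
  intro d _
  classical
  have hFd : recComp (MAJ 3) d = Stmt16.F d := rfl
  rw [hFd]
  have hcast : ∀ m : ℕ, m ≤ 2 ^ d → (m : ℝ) ≤ (2 : ℝ) ^ d := by
    intro m hm
    calc (m : ℝ) ≤ ((2 ^ d : ℕ) : ℝ) := Nat.cast_le.2 hm
      _ = (2 : ℝ) ^ d := by push_cast; ring
  apply le_antisymm
  · apply Stmt16.specNorm_le_of _ ((2 : ℝ) ^ d) (by positivity) (Stmt16.sensAdj_01 _)
    · intro x
      rw [Stmt16.rowsum]
      exact hcast _ (Stmt16.scnt_le d x)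
    · intro y
      have h1 : ∑ x, sensAdj (Stmt16.F d) x y = ∑ x, sensAdj (Stmt16.F d) y x :=
        Finset.sum_congr rfl fun x _ => Stmt16.sensAdj_symm _ x y
      rw [h1, Stmt16.rowsum]
      exact hcast _ (Stmt16.scnt_le d y)
  · obtain ⟨x₀, hx₀, -⟩ := Stmt16.good_ex d true
    set A := sensAdj (Stmt16.F d) with hA
    set v : EuclideanSpace ℝ (Fin (3 ^ d) → Bool) :=
      WithLp.toLp 2 (fun y => if Stmt16.good d y then 1 else 0) with hv
    have hvapp : ∀ y, v y = if Stmt16.good d y then 1 else 0 := fun y => rfl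
    apply Stmt16.specNorm_ge _ v
    · intro h0
      have h1 := congrArg (fun w => w x₀) h0
      rw [hvapp x₀] at h1
      · rw [if_pos hx₀] at h1
        exact one_ne_zero h1
    · have hnormsq : ‖v‖ ^ 2 = ((Finset.univ.filter (Stmt16.good d)).card : ℝ) := by
        rw [← real_inner_self_eq_norm_sq, PiLp.inner_apply]
        have h2 : ∀ y, ⟪v y, v y⟫ = if Stmt16.good d y then (1 : ℝ) else 0 := by
          intro y
          rw [RCLike.inner_apply, starRingEnd_apply, star_trivial, hvapp y]
          split <;> norm_num
        rw [Finset.sum_congr rfl fun y _ => h2 y, Finset.sum_boole]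
      have hTv : ∀ x, Stmt16.good d x →
          (Matrix.toEuclideanCLM (𝕜 := ℝ) A) v x = (2 : ℝ) ^ d := by
        intro x hx
        rw [Stmt16.clm_apply]
        have h3 : ∀ y, A x y * v y = A x y := by
          intro y
          rcases Stmt16.sensAdj_01 (Stmt16.F d) x y with h | h
          · rw [hA, h, zero_mul]
          · have hy : Stmt16.good d y := by
              have hcond : (∃ i, y = flip1 x i) ∧ Stmt16.F d x ≠ Stmt16.F d y := by
                by_contra hc
                unfold sensAdj at h
                rw [if_neg hc] at h
                norm_num at h
              obtain ⟨⟨i, rfl⟩, hne⟩ := hcond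
              exact Stmt16.good_closed d x i hx (Ne.symm hne)
            rw [hvapp y, if_pos hy, mul_one]
        rw [Finset.sum_congr rfl fun y _ => h3 y, hA, Stmt16.rowsum,
          Stmt16.good_scnt d x hx]
        push_cast; ring
      have hinner : ⟪v, (Matrix.toEuclideanCLM (𝕜 := ℝ) A) v⟫
          = ((Finset.univ.filter (Stmt16.good d)).card : ℝ) * 2 ^ d := by
        rw [PiLp.inner_apply]
        have h4 : ∀ x, ⟪v x, (Matrix.toEuclideanCLM (𝕜 := ℝ) A) v x⟫
            = if Stmt16.good d x then (Matrix.toEuclideanCLM (𝕜 := ℝ) A) v x else 0 := by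
          intro x
          rw [RCLike.inner_apply, starRingEnd_apply, star_trivial, hvapp x]
          split <;> ring
        rw [Finset.sum_congr rfl fun x _ => h4 x, ← Finset.sum_filter]
        rw [Finset.sum_congr rfl fun x hx => hTv x (Finset.mem_filter.1 hx).2]
        rw [Finset.sum_const, nsmul_eq_mul]
      rw [hinner, hnormsq]
      apply le_of_eq
      ring
end
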